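/- arXiv:2105.00536 — 11 statements merged into one kernel-verified Lean document; each statement's English description precedes it below -/
import Mathlib

section
/- Let n = 2l ≥ 4 be even and let G be the n-dimensional real Lie algebra with basis {X1,…,Xn} and nonzero brackets [X3,X1]=X1 and [X_{3+2i},X_{4+2i}]=X2 for 0 ≤ i ≤ (n−4)/2 (this is G_{4,1} when n=4 and G_{6+2k,1} when n=6+2k). Then G admits a faithful representation of degree (3/2)n+1, i.e. there exists an injective Lie algebra homomorphism from G into the Lie algebra of ((3/2)n+1)×((3/2)n+1) real matrices; hence μ(G) ≤ (3/2)n+1. -/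
/-!
In the basis `b k = X_{k+1}`, the representation is the sum of two matrix-unit models with
orthogonal supports: the Heisenberg algebra spanned by `b 1, b 2, …, b (2m+3)` acts on the
coordinates `0, …, m+2` by `b 1 ↦ E(0, m+2)`, `b (2j) ↦ E(0, j)`, `b (2j+1) ↦ E(j, m+2)`
(`1 ≤ j ≤ m+1`), and the affine algebra spanned by `b 2, b 0` acts on the coordinates `m+3, m+4`
by `b 2 ↦ E(m+3, m+3)`, `b 0 ↦ E(m+3, m+4)`; the other coordinates are not used. Products across
the two blocks vanish, so the bracket relations are checked blockwise, and each `b k` is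
represented by a matrix unit (plus, for `k = 2`, the diagonal unit `E(m+3, m+3)`) whose position
no other basis vector touches, which makes the representation faithful.
-/
theorem LinearMap.map_lie_of_basis {R L M ι : Type*} [CommRing R] [LieRing L] [LieAlgebra R L]
    [LieRing M] [LieAlgebra R M] (b : Module.Basis ι R L) (f : L →ₗ[R] M)
    (h : ∀ i j, f ⁅b i, b j⁆ = ⁅f (b i), f (b j)⁆) (x y : L) :
    f ⁅x, y⁆ = ⁅f x, f y⁆ := by
  have := LinearMap.ext_basis (B := (LieModule.toEnd R L L : L →ₗ[R] L →ₗ[R] L).compr₂ f)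
    (B' := (LieModule.toEnd R M M : M →ₗ[R] M →ₗ[R] M).compl₁₂ f f) b b (by simpa using h)
  simpa using LinearMap.congr_fun₂ this x y

open Matrix

namespace AffineHeisenberg

variable (m : ℕ)

def idx (a : ℕ) : Fin (3*m+7) := ⟨a % (3*m+7), Nat.mod_lt _ (by omega)⟩

def matrixUnit (a c : ℕ) : Matrix (Fin (3*m+7)) (Fin (3*m+7)) ℝ := single (idx m a) (idx m c) 1

variable {m}

lemma idx_inj {a c : ℕ} (ha : a < 3*m+7) (hc : c < 3*m+7) : idx m a = idx m c ↔ a = c := by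
  simp [idx, Fin.ext_iff, Nat.mod_eq_of_lt ha, Nat.mod_eq_of_lt hc]

lemma matrixUnit_mul {a c a' c' : ℕ} (hc : c < 3*m+7) (ha' : a' < 3*m+7) :
    matrixUnit m a c * matrixUnit m a' c' = if c = a' then matrixUnit m a c' else 0 := by
  split_ifs with h
  · subst h; simp [matrixUnit]
  · exact single_mul_single_of_ne _ _ _ _ (mt (idx_inj hc ha').1 h) 1

lemma matrixUnit_apply {a c a' c' : ℕ} (ha : a < 3*m+7) (hc : c < 3*m+7) (ha' : a' < 3*m+7)
    (hc' : c' < 3*m+7) :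
    matrixUnit m a c (idx m a') (idx m c') = if a = a' ∧ c = c' then 1 else 0 := by
  simp only [matrixUnit, single_apply, idx_inj ha ha', idx_inj hc hc']

variable (m) in
/-- `b k` is represented by `E(row k, col k)`, plus `E(m+3, m+3)` when `k = 2`. -/
def row (k : ℕ) : ℕ := if k = 0 then m + 3 else if k = 1 ∨ k % 2 = 0 then 0 else k / 2

variable (m) in
def col (k : ℕ) : ℕ := if k = 0 then m + 4 else if k % 2 = 1 then m + 2 else k / 2

lemma row_lt {k : ℕ} (hk : k < 2*m+4) : row m k < 3*m+7 := by
  grind [row]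

lemma col_lt {k : ℕ} (hk : k < 2*m+4) : col m k < 3*m+7 := by
  grind [col]

lemma col_eq_row_iff {i j : ℕ} (hi : i < 2*m+4) (hj : j < 2*m+4) :
    col m i = row m j ↔ 2 ≤ i ∧ i % 2 = 0 ∧ j = i + 1 := by
  grind [row, col]

lemma row_col_inj {i k : ℕ} (hi : i < 2*m+4) (hk : k < 2*m+4) :
    row m i = row m k ∧ col m i = col m k ↔ i = k := by
  grind [row, col]

lemma row_eq_add_three_iff {k : ℕ} (hk : k < 2*m+4) : row m k = m + 3 ↔ k = 0 := by
  grind [row]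

lemma col_ne_add_three {k : ℕ} (hk : k < 2*m+4) : col m k ≠ m + 3 := by
  unfold col; split_ifs <;> omega

variable (m) in
def rep (k : ℕ) : Matrix (Fin (3*m+7)) (Fin (3*m+7)) ℝ :=
  matrixUnit m (row m k) (col m k) + if k = 2 then matrixUnit m (m+3) (m+3) else 0

lemma rep_zero : rep m 0 = matrixUnit m (m+3) (m+4) := by simp [rep, row, col]

lemma rep_one : rep m 1 = matrixUnit m 0 (m+2) := by simp [rep, row, col]

lemma rep_mul {i j : ℕ} (hi : i < 2*m+4) (hj : j < 2*m+4) :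
    rep m i * rep m j =
      (if 2 ≤ i ∧ i % 2 = 0 ∧ j = i + 1 then rep m 1 else 0) +
      (if i = 2 ∧ j = 0 then rep m 0 else 0) +
      (if i = 2 ∧ j = 2 then matrixUnit m (m+3) (m+3) else 0) := by
  have h3 : m + 3 < 3*m+7 := by omega
  rw [rep_zero, rep_one]
  simp only [rep, add_mul, mul_add, ite_mul, mul_ite, zero_mul, mul_zero, zero_add,
    matrixUnit_mul (col_lt hi) (row_lt hj), matrixUnit_mul (col_lt hi) h3,
    matrixUnit_mul h3 (row_lt hj), matrixUnit_mul h3 h3, col_eq_row_iff hi hj, eq_comm (a := m + 3),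
    row_eq_add_three_iff hj, if_neg (col_ne_add_three hi), if_true]
  congr 1; congr 1
  · exact ite_congr rfl (fun _ => by congr 1 <;> grind [row, col]) (fun _ => rfl)
  · split_ifs <;> simp_all [col]
  · split_ifs <;> simp_all

lemma rep_commutator {i j : ℕ} (hi : i < 2*m+4) (hj : j < 2*m+4) :
    rep m i * rep m j - rep m j * rep m i =
      (if i = 2 ∧ j = 0 then (1:ℝ) else if i = 0 ∧ j = 2 then -1 else 0) • rep m 0 +
      (if 2 ≤ i ∧ i % 2 = 0 ∧ j = i + 1 then (1:ℝ) else
       if 2 ≤ j ∧ j % 2 = 0 ∧ i = j + 1 then -1 else 0) • rep m 1 := by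
  rw [rep_mul hi hj, rep_mul hj hi]
  split_ifs <;> first | omega | simp

lemma rep_apply_pivot {i k : ℕ} (hi : i < 2*m+4) (hk : k < 2*m+4) :
    rep m i (idx m (row m k)) (idx m (col m k)) = if i = k then 1 else 0 := by
  have h3 : m + 3 < 3*m+7 := by omega
  have hD : ¬(m + 3 = row m k ∧ m + 3 = col m k) := fun h => col_ne_add_three hk h.2.symm
  simp only [rep, Matrix.add_apply, matrixUnit_apply (row_lt hi) (col_lt hi) (row_lt hk) (col_lt hk),
    row_col_inj hi hk, apply_ite (fun A : Matrix _ _ ℝ => A (idx m (row m k)) (idx m (col m k))),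
    matrixUnit_apply h3 h3 (row_lt hk) (col_lt hk), Matrix.zero_apply, if_neg hD, ite_self, add_zero]

lemma linearIndependent_rep : LinearIndependent ℝ fun k : Fin (2*m+4) => rep m k :=
  .of_pairwise_dual_eq_zero_one _
    (fun k => entryLinearMap ℝ ℝ (idx m (row m k)) (idx m (col m k)))
    (fun k i hki => by simp [rep_apply_pivot i.isLt k.isLt, Fin.val_inj, hki.symm])
    (fun k => by simp [rep_apply_pivot k.isLt k.isLt])

end AffineHeisenberg

attribute [local instance] LieRing.ofAssociativeRing LieAlgebra.ofAssociativeAlgebra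

/-- for even `n = 2l ≥ 4` (here written `n = 2m+4`, `l = m+2`), the
`n`-dimensional real Lie algebra `G` with basis `X1,…,Xn` and nonzero brackets
`[X3,X1]=X1`, `[X_{3+2i},X_{4+2i}]=X2` (`0 ≤ i ≤ (n−4)/2`) admits a faithful
representation of degree `(3/2)n+1 = 3m+7`; hence `μ(G) ≤ (3/2)n+1`. -/
theorem stmt_3 (m : ℕ) (L : Type) [LieRing L] [LieAlgebra ℝ L]
    (b : Module.Basis (Fin (2*m+4)) ℝ L)
    (hbracket : ∀ i j : Fin (2*m+4), ⁅b i, b j⁆ =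
      (if i.val = 2 ∧ j.val = 0 then (1:ℝ) else
       if i.val = 0 ∧ j.val = 2 then -1 else 0) • b 0 +
      (if 2 ≤ i.val ∧ i.val % 2 = 0 ∧ j.val = i.val + 1 then (1:ℝ) else
       if 2 ≤ j.val ∧ j.val % 2 = 0 ∧ i.val = j.val + 1 then -1 else 0) • b 1) :
    ∃ ρ : L →ₗ⁅ℝ⁆ Module.End ℝ (Fin (3*m+7) → ℝ), Function.Injective ρ := by
  open AffineHeisenberg in
  let f : L →ₗ[ℝ] Matrix (Fin (3*m+7)) (Fin (3*m+7)) ℝ := b.constr ℝ fun k => rep m k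
  have hf (k : Fin (2*m+4)) : f (b k) = rep m k := b.constr_basis ℝ _ k
  let ρ : L →ₗ⁅ℝ⁆ Matrix (Fin (3*m+7)) (Fin (3*m+7)) ℝ :=
    { f with
      map_lie' := f.map_lie_of_basis b (fun i j => by
        rw [hbracket, map_add, map_smul, map_smul, hf, hf, hf, hf, Ring.lie_def,
          rep_commutator i.isLt j.isLt]
        simp) _ _ }
  refine ⟨(Matrix.toLinAlgEquiv' : Matrix _ _ ℝ ≃ₐ[ℝ] _).toAlgHom.toLieHom.comp ρ, ?_⟩
  exact Matrix.toLinAlgEquiv'.injective.comp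
    (b.injective_constr_of_linearIndependent (R₂ := ℝ) linearIndependent_rep)
end

section
/- For each of the following real Lie algebras G and for every X ∈ G, the operator ad_X : G → G has no nonzero purely imaginary complex eigenvalue; that is, no root of the characteristic polynomial of ad_X (over ℂ) has the form iy with y a nonzero real number. The algebras are: G_{3,1(λ)} ([X3,X1]=X1, [X3,X2]=λX2, 0<|λ|≤1); G_{3,2} ([X3,X1]=X1, [X3,X2]=X1+X2); G_{3,3(λ)} with λ>0 ([X3,X1]=λX1−X2, [X3,X2]=X1+λX2); G_{4,1} ([X3,X1]=X1, [X3,X4]=X2); G_{4,2} ([X3,X2]=X1, [X3,X4]=X2); G_{4,3} ([X3,X2]=X1, [X4,X1]=X1, [X4,X2]=X2); G_{5+2k} ([X3,X4]=X1, [X3,X1]=[X4,X5]=⋯=[X_{4+2k},X_{5+2k}]=X2); G_{6+2k,1} ([X3,X1]=X1, [X3,X4]=[X5,X6]=⋯=[X_{5+2k},X_{6+2k}]=X2); G_{6+2k,2} ([X3,X4]=X1, [X3,X1]=[X5,X6]=⋯=[X_{5+2k},X_{6+2k}]=X2), with k≥0. -/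
/-- For a real Lie algebra `L` with basis `b`, no `ad_X` has a nonzero purely imaginary
complex eigenvalue: no root of the characteristic polynomial (over `ℂ`) of the matrix of
`ad_X` in the basis `b` has the form `i·y` with `y` a nonzero real number. -/
def NoPurelyImaginaryEigenvalues {n : ℕ} (L : Type) [LieRing L] [LieAlgebra ℝ L]
    (b : Module.Basis (Fin n) ℝ L) : Prop :=
  ∀ X : L, ∀ y : ℝ, y ≠ 0 →
    ¬ ((((LinearMap.toMatrix b b) (LieAlgebra.ad ℝ L X)).map
        (algebraMap ℝ ℂ)).charpoly.IsRoot (Complex.I * y))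

/-! In each of these algebras the derived algebra lies in `span {X1, X2}`, so `ad_X` maps into
that plane and every nonzero eigenvalue of `ad_X` is an eigenvalue of the real `2 × 2` block of
`ad_X` on it. Such a block has a nonzero purely imaginary eigenvalue only if its trace vanishes
and the product of its off-diagonal entries is negative. The block is triangular in all cases
but `G_{3,3(λ)}`, where its trace `2λ·x₃` vanishes only together with the whole block. -/

open Polynomial Matrix

theorem Matrix.sub_mul_sub_eq_mul_of_isRoot_charpoly {ι K : Type*} [Fintype ι] [DecidableEq ι]
    [Field K] {M : Matrix ι ι K} {p q : ι} (hpq : p ≠ q)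
    (hM : ∀ i j, i ≠ p → i ≠ q → M i j = 0) {z : K} (hz : z ≠ 0)
    (hroot : M.charpoly.IsRoot z) :
    (z - M p p) * (z - M q q) = M p q * M q p := by
  rw [IsRoot, eval_charpoly] at hroot
  obtain ⟨v, hv, hMv⟩ := exists_mulVec_eq_zero_iff.mpr hroot
  have heigen : ∀ i, z * v i = ∑ j, M i j * v j := fun i => by
    have := congrFun hMv i
    rw [sub_mulVec, Pi.sub_apply, scalar_apply, mulVec_diagonal, Pi.zero_apply, sub_eq_zero] at this
    rw [this, mulVec, dotProduct]
  -- Since `z ≠ 0`, an eigenvector lies in the range of `M`, hence is supported on `{p, q}`.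
  have hsupp : ∀ i, i ≠ p → i ≠ q → v i = 0 := fun i hip hiq => by
    simpa [hM i _ hip hiq, hz] using heigen i
  have hrow : ∀ i, z * v i = M i p * v p + M i q * v q := fun i => by
    rw [heigen, Finset.sum_eq_add_of_mem p q (Finset.mem_univ _) (Finset.mem_univ _) hpq
      fun j _ hj => by rw [hsupp j hj.1 hj.2, mul_zero]]
  have hp : ((z - M p p) * (z - M q q) - M p q * M q p) * v p = 0 := by
    linear_combination (z - M q q) * hrow p + M p q * hrow q
  have hq : ((z - M p p) * (z - M q q) - M p q * M q p) * v q = 0 := by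
    linear_combination M q p * hrow p + (z - M p p) * hrow q
  obtain ⟨i, hi⟩ := Function.ne_iff.mp hv
  rw [← sub_eq_zero]
  by_cases hip : i = p
  · exact (mul_eq_zero.mp hp).resolve_right (hip ▸ hi)
  by_cases hiq : i = q
  · exact (mul_eq_zero.mp hq).resolve_right (hiq ▸ hi)
  exact absurd (hsupp i hip hiq) hi

theorem Complex.add_eq_zero_and_mul_neg_of_sub_mul_sub {y r s t u : ℝ} (hy : y ≠ 0)
    (h : (I * y - r) * (I * y - s) = t * u) : r + s = 0 ∧ t * u < 0 := by
  have him := congrArg im h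
  have hre := congrArg re h
  simp only [mul_im, sub_re, mul_re, I_re, ofReal_re, zero_mul, I_im, ofReal_im, mul_zero,
    sub_self, zero_sub, sub_im, one_mul, zero_add, sub_zero, neg_mul, mul_neg, add_zero,
    neg_neg] at him hre
  have hrs : r + s = 0 :=
    (mul_eq_zero.mp (by linear_combination -him : y * (r + s) = 0)).resolve_left hy
  have htu : t * u = -(r ^ 2 + y ^ 2) := by
    rw [← hre, eq_neg_of_add_eq_zero_right hrs]; ring
  exact ⟨hrs, by rw [htu]; linarith [sq_nonneg r, sq_pos_of_ne_zero hy]⟩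

theorem lie_eq_neg_of_lie_eq {L : Type*} [LieRing L] {x y z : L} (h : ⁅x, y⁆ = z) :
    ⁅y, x⁆ = -z := by
  rw [← lie_skew, h]

theorem lie_basis_eq_sum_smul_add_sum_smul {R L ι : Type*} [CommRing R] [LieRing L]
    [LieAlgebra R L] [Fintype ι] (b : Module.Basis ι R L) {u v : L} {A B : ι → ι → R}
    (h : ∀ i j, ⁅b i, b j⁆ = A i j • u + B i j • v) (X : L) (j : ι) :
    ⁅X, b j⁆ = (∑ i, b.repr X i * A i j) • u + (∑ i, b.repr X i * B i j) • v := by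
  conv_lhs => rw [← b.sum_repr X]
  simp only [sum_lie, smul_lie, h, smul_add, Finset.sum_add_distrib, Finset.sum_smul, mul_smul]

theorem noPurelyImaginaryEigenvalues_of_lie_basis {n : ℕ} {L : Type} [LieRing L]
    [LieAlgebra ℝ L] (b : Module.Basis (Fin n) ℝ L) {p q : Fin n} (hpq : p ≠ q)
    {A B : Fin n → Fin n → ℝ} (h : ∀ i j, ⁅b i, b j⁆ = A i j • b p + B i j • b q)
    (hblock : ∀ x : Fin n → ℝ, ∑ i, x i * A i p + ∑ i, x i * B i q = 0 →
      0 ≤ (∑ i, x i * A i q) * (∑ i, x i * B i p)) :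
    NoPurelyImaginaryEigenvalues L b := by
  intro X y hy hroot
  set P : Fin n → ℝ := fun j => ∑ i, b.repr X i * A i j
  set Q : Fin n → ℝ := fun j => ∑ i, b.repr X i * B i j
  have hM : ∀ i j, LinearMap.toMatrix b b (LieAlgebra.ad ℝ L X) i j =
      (if p = i then P j else 0) + (if q = i then Q j else 0) := fun i j => by
    rw [LinearMap.toMatrix_apply, LieAlgebra.ad_apply, lie_basis_eq_sum_smul_add_sum_smul b h]
    simp [Finsupp.single_apply, P, Q]
  have key := Matrix.sub_mul_sub_eq_mul_of_isRoot_charpoly hpq (fun i j hip hiq => by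
    simp [hM, Ne.symm hip, Ne.symm hiq]) (by simpa using hy) hroot
  simp only [Matrix.map_apply, hM, if_neg hpq, if_neg hpq.symm] at key
  obtain ⟨htr, hdet⟩ := Complex.add_eq_zero_and_mul_neg_of_sub_mul_sub hy (by simpa using key)
  exact (hblock _ htr).not_gt hdet

section ThreeDimensional

variable (L : Type) [LieRing L] [LieAlgebra ℝ L] (b : Module.Basis (Fin 3) ℝ L)

theorem noPurelyImaginaryEigenvalues_g3_1 (lam : ℝ) (h20 : ⁅b 2, b 0⁆ = b 0)
    (h21 : ⁅b 2, b 1⁆ = lam • b 1) (h01 : ⁅b 0, b 1⁆ = 0) :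
    NoPurelyImaginaryEigenvalues L b := by
  refine noPurelyImaginaryEigenvalues_of_lie_basis b (p := 0) (q := 1) (by decide)
    (A := !![0, 0, -1; 0, 0, 0; 1, 0, 0]) (B := !![0, 0, 0; 0, 0, -lam; 0, lam, 0])
    (fun i j => ?_) fun x _ => by simp [Fin.sum_univ_three]
  fin_cases i <;> fin_cases j <;>
    simp [h20, h21, h01, lie_eq_neg_of_lie_eq h20, lie_eq_neg_of_lie_eq h21,
      lie_eq_neg_of_lie_eq h01]

theorem noPurelyImaginaryEigenvalues_g3_2 (h20 : ⁅b 2, b 0⁆ = b 0)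
    (h21 : ⁅b 2, b 1⁆ = b 0 + b 1) (h01 : ⁅b 0, b 1⁆ = 0) :
    NoPurelyImaginaryEigenvalues L b := by
  refine noPurelyImaginaryEigenvalues_of_lie_basis b (p := 0) (q := 1) (by decide)
    (A := !![0, 0, -1; 0, 0, -1; 1, 1, 0]) (B := !![0, 0, 0; 0, 0, -1; 0, 1, 0])
    (fun i j => ?_) fun x _ => by simp [Fin.sum_univ_three]
  fin_cases i <;> fin_cases j <;>
    simp [h20, h21, h01, lie_eq_neg_of_lie_eq h20, lie_eq_neg_of_lie_eq h21,
      lie_eq_neg_of_lie_eq h01]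
  abel

theorem noPurelyImaginaryEigenvalues_g3_3 (lam : ℝ) (hlam : lam ≠ 0)
    (h20 : ⁅b 2, b 0⁆ = lam • b 0 - b 1) (h21 : ⁅b 2, b 1⁆ = b 0 + lam • b 1)
    (h01 : ⁅b 0, b 1⁆ = 0) : NoPurelyImaginaryEigenvalues L b := by
  refine noPurelyImaginaryEigenvalues_of_lie_basis b (p := 0) (q := 1) (by decide)
    (A := !![0, 0, -lam; 0, 0, -1; lam, 1, 0]) (B := !![0, 0, 1; 0, 0, -lam; -1, lam, 0])
    (fun i j => ?_) fun x htr => ?_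
  · fin_cases i <;> fin_cases j <;>
      simp [h20, h21, h01, lie_eq_neg_of_lie_eq h20, lie_eq_neg_of_lie_eq h21,
        lie_eq_neg_of_lie_eq h01] <;> module
  · have hx : x 2 = 0 := by simpa [Fin.sum_univ_three, hlam] using htr
    simp [Fin.sum_univ_three, hx]

end ThreeDimensional

section FourDimensional

variable (L : Type) [LieRing L] [LieAlgebra ℝ L] (b : Module.Basis (Fin 4) ℝ L)

theorem noPurelyImaginaryEigenvalues_g4_1 (h20 : ⁅b 2, b 0⁆ = b 0) (h23 : ⁅b 2, b 3⁆ = b 1)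
    (h21 : ⁅b 2, b 1⁆ = 0) (h01 : ⁅b 0, b 1⁆ = 0) (h03 : ⁅b 0, b 3⁆ = 0)
    (h13 : ⁅b 1, b 3⁆ = 0) : NoPurelyImaginaryEigenvalues L b := by
  refine noPurelyImaginaryEigenvalues_of_lie_basis b (p := 0) (q := 1) (by decide)
    (A := !![0, 0, -1, 0; 0, 0, 0, 0; 1, 0, 0, 0; 0, 0, 0, 0])
    (B := !![0, 0, 0, 0; 0, 0, 0, 0; 0, 0, 0, 1; 0, 0, -1, 0])
    (fun i j => ?_) fun x _ => by simp [Fin.sum_univ_four]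
  fin_cases i <;> fin_cases j <;>
    simp [h20, h23, h21, h01, h03, h13, lie_eq_neg_of_lie_eq h20, lie_eq_neg_of_lie_eq h23,
      lie_eq_neg_of_lie_eq h21, lie_eq_neg_of_lie_eq h01, lie_eq_neg_of_lie_eq h03,
      lie_eq_neg_of_lie_eq h13]

theorem noPurelyImaginaryEigenvalues_g4_2 (h21 : ⁅b 2, b 1⁆ = b 0) (h23 : ⁅b 2, b 3⁆ = b 1)
    (h20 : ⁅b 2, b 0⁆ = 0) (h01 : ⁅b 0, b 1⁆ = 0) (h03 : ⁅b 0, b 3⁆ = 0)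
    (h13 : ⁅b 1, b 3⁆ = 0) : NoPurelyImaginaryEigenvalues L b := by
  refine noPurelyImaginaryEigenvalues_of_lie_basis b (p := 0) (q := 1) (by decide)
    (A := !![0, 0, 0, 0; 0, 0, -1, 0; 0, 1, 0, 0; 0, 0, 0, 0])
    (B := !![0, 0, 0, 0; 0, 0, 0, 0; 0, 0, 0, 1; 0, 0, -1, 0])
    (fun i j => ?_) fun x _ => by simp [Fin.sum_univ_four]
  fin_cases i <;> fin_cases j <;>
    simp [h20, h23, h21, h01, h03, h13, lie_eq_neg_of_lie_eq h20, lie_eq_neg_of_lie_eq h23,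
      lie_eq_neg_of_lie_eq h21, lie_eq_neg_of_lie_eq h01, lie_eq_neg_of_lie_eq h03,
      lie_eq_neg_of_lie_eq h13]

theorem noPurelyImaginaryEigenvalues_g4_3 (h21 : ⁅b 2, b 1⁆ = b 0) (h30 : ⁅b 3, b 0⁆ = b 0)
    (h31 : ⁅b 3, b 1⁆ = b 1) (h01 : ⁅b 0, b 1⁆ = 0) (h20 : ⁅b 2, b 0⁆ = 0)
    (h23 : ⁅b 2, b 3⁆ = 0) : NoPurelyImaginaryEigenvalues L b := by
  refine noPurelyImaginaryEigenvalues_of_lie_basis b (p := 0) (q := 1) (by decide)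
    (A := !![0, 0, 0, -1; 0, 0, -1, 0; 0, 1, 0, 0; 1, 0, 0, 0])
    (B := !![0, 0, 0, 0; 0, 0, 0, -1; 0, 0, 0, 0; 0, 1, 0, 0])
    (fun i j => ?_) fun x _ => by simp [Fin.sum_univ_four]
  fin_cases i <;> fin_cases j <;>
    simp [h21, h30, h31, h01, h20, h23, lie_eq_neg_of_lie_eq h21, lie_eq_neg_of_lie_eq h30,
      lie_eq_neg_of_lie_eq h31, lie_eq_neg_of_lie_eq h01, lie_eq_neg_of_lie_eq h20,
      lie_eq_neg_of_lie_eq h23]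

end FourDimensional

/-- for each of the Lie algebras `G_{3,1(λ)}` (`0<|λ|≤1`), `G_{3,2}`,
`G_{3,3(λ)}` (`λ>0`), `G_{4,1}`, `G_{4,2}`, `G_{4,3}`, `G_{5+2k}`, `G_{6+2k,1}`,
`G_{6+2k,2}` (`k≥0`) and every element `X`, the operator `ad_X` has no nonzero purely
imaginary complex eigenvalue. -/
theorem stmt_7 :
    -- G_{3,1(λ)}: [X3,X1]=X1, [X3,X2]=λX2, 0<|λ|≤1
    (∀ (lam : ℝ), 0 < |lam| → |lam| ≤ 1 →
      ∀ (L : Type) [LieRing L] [LieAlgebra ℝ L] (b : Module.Basis (Fin 3) ℝ L),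
        ⁅b 2, b 0⁆ = b 0 → ⁅b 2, b 1⁆ = lam • b 1 → ⁅b 0, b 1⁆ = 0 →
          NoPurelyImaginaryEigenvalues L b) ∧
    -- G_{3,2}: [X3,X1]=X1, [X3,X2]=X1+X2
    (∀ (L : Type) [LieRing L] [LieAlgebra ℝ L] (b : Module.Basis (Fin 3) ℝ L),
        ⁅b 2, b 0⁆ = b 0 → ⁅b 2, b 1⁆ = b 0 + b 1 → ⁅b 0, b 1⁆ = 0 →
          NoPurelyImaginaryEigenvalues L b) ∧
    -- G_{3,3(λ)} with λ>0: [X3,X1]=λX1−X2, [X3,X2]=X1+λX2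
    (∀ (lam : ℝ), 0 < lam →
      ∀ (L : Type) [LieRing L] [LieAlgebra ℝ L] (b : Module.Basis (Fin 3) ℝ L),
        ⁅b 2, b 0⁆ = lam • b 0 - b 1 → ⁅b 2, b 1⁆ = b 0 + lam • b 1 → ⁅b 0, b 1⁆ = 0 →
          NoPurelyImaginaryEigenvalues L b) ∧
    -- G_{4,1}: [X3,X1]=X1, [X3,X4]=X2
    (∀ (L : Type) [LieRing L] [LieAlgebra ℝ L] (b : Module.Basis (Fin 4) ℝ L),
        ⁅b 2, b 0⁆ = b 0 → ⁅b 2, b 3⁆ = b 1 → ⁅b 2, b 1⁆ = 0 →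
        ⁅b 0, b 1⁆ = 0 → ⁅b 0, b 3⁆ = 0 → ⁅b 1, b 3⁆ = 0 →
          NoPurelyImaginaryEigenvalues L b) ∧
    -- G_{4,2}: [X3,X2]=X1, [X3,X4]=X2
    (∀ (L : Type) [LieRing L] [LieAlgebra ℝ L] (b : Module.Basis (Fin 4) ℝ L),
        ⁅b 2, b 1⁆ = b 0 → ⁅b 2, b 3⁆ = b 1 → ⁅b 2, b 0⁆ = 0 →
        ⁅b 0, b 1⁆ = 0 → ⁅b 0, b 3⁆ = 0 → ⁅b 1, b 3⁆ = 0 →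
          NoPurelyImaginaryEigenvalues L b) ∧
    -- G_{4,3}: [X3,X2]=X1, [X4,X1]=X1, [X4,X2]=X2
    (∀ (L : Type) [LieRing L] [LieAlgebra ℝ L] (b : Module.Basis (Fin 4) ℝ L),
        ⁅b 2, b 1⁆ = b 0 → ⁅b 3, b 0⁆ = b 0 → ⁅b 3, b 1⁆ = b 1 →
        ⁅b 0, b 1⁆ = 0 → ⁅b 2, b 0⁆ = 0 → ⁅b 2, b 3⁆ = 0 →
          NoPurelyImaginaryEigenvalues L b) ∧
    -- G_{5+2k}: [X3,X4]=X1, [X3,X1]=[X4,X5]=⋯=[X_{4+2k},X_{5+2k}]=X2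
    (∀ (k : ℕ) (L : Type) [LieRing L] [LieAlgebra ℝ L] (b : Module.Basis (Fin (2*k+5)) ℝ L),
        (∀ i j : Fin (2*k+5), ⁅b i, b j⁆ =
          (if i.val = 2 ∧ j.val = 3 then (1:ℝ) else
           if i.val = 3 ∧ j.val = 2 then -1 else 0) • b 0 +
          (if i.val = 2 ∧ j.val = 0 then (1:ℝ) else
           if i.val = 0 ∧ j.val = 2 then -1 else
           if 3 ≤ i.val ∧ i.val % 2 = 1 ∧ j.val = i.val + 1 then 1 else
           if 3 ≤ j.val ∧ j.val % 2 = 1 ∧ i.val = j.val + 1 then -1 else 0) • b 1) →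
          NoPurelyImaginaryEigenvalues L b) ∧
    -- G_{6+2k,1}: [X3,X1]=X1, [X3,X4]=[X5,X6]=⋯=[X_{5+2k},X_{6+2k}]=X2
    (∀ (k : ℕ) (L : Type) [LieRing L] [LieAlgebra ℝ L] (b : Module.Basis (Fin (2*k+6)) ℝ L),
        (∀ i j : Fin (2*k+6), ⁅b i, b j⁆ =
          (if i.val = 2 ∧ j.val = 0 then (1:ℝ) else
           if i.val = 0 ∧ j.val = 2 then -1 else 0) • b 0 +
          (if 2 ≤ i.val ∧ i.val % 2 = 0 ∧ j.val = i.val + 1 then (1:ℝ) else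
           if 2 ≤ j.val ∧ j.val % 2 = 0 ∧ i.val = j.val + 1 then -1 else 0) • b 1) →
          NoPurelyImaginaryEigenvalues L b) ∧
    -- G_{6+2k,2}: [X3,X4]=X1, [X3,X1]=[X5,X6]=⋯=[X_{5+2k},X_{6+2k}]=X2
    (∀ (k : ℕ) (L : Type) [LieRing L] [LieAlgebra ℝ L] (b : Module.Basis (Fin (2*k+6)) ℝ L),
        (∀ i j : Fin (2*k+6), ⁅b i, b j⁆ =
          (if i.val = 2 ∧ j.val = 3 then (1:ℝ) else
           if i.val = 3 ∧ j.val = 2 then -1 else 0) • b 0 +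
          (if i.val = 2 ∧ j.val = 0 then (1:ℝ) else
           if i.val = 0 ∧ j.val = 2 then -1 else
           if 4 ≤ i.val ∧ i.val % 2 = 0 ∧ j.val = i.val + 1 then 1 else
           if 4 ≤ j.val ∧ j.val % 2 = 0 ∧ i.val = j.val + 1 then -1 else 0) • b 1) →
          NoPurelyImaginaryEigenvalues L b) := by
  refine ⟨fun lam _ _ L _ _ b => noPurelyImaginaryEigenvalues_g3_1 L b lam,
    noPurelyImaginaryEigenvalues_g3_2,
    fun lam hlam L _ _ b => noPurelyImaginaryEigenvalues_g3_3 L b lam hlam.ne',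
    noPurelyImaginaryEigenvalues_g4_1, noPurelyImaginaryEigenvalues_g4_2,
    noPurelyImaginaryEigenvalues_g4_3, ?_, ?_, ?_⟩ <;>
  -- in these families no bracket `⁅b i, b 1⁆` has a `b 0`-component, so the block is triangular
  exact fun k L _ _ b h =>
    noPurelyImaginaryEigenvalues_of_lie_basis b (by simp) h fun _ _ => by simp
end

section
/- Let G = G_{3,1(λ)} (0<|λ|≤1) and let F = (f1,f2,f3) ∈ G* ≅ ℝ³. If f1 = f2 = 0 then Ω_F(G) = {F}. If (f1,f2) ≠ (0,0) then Ω_F(G) = { (f1·s, f2·s^λ, t) : s,t ∈ ℝ, s > 0 }, where s^λ := exp(λ ln s). -/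
/-!
Write `X = x₁X₁ + x₂X₂ + x₃X₃`. In the basis, `ad_X` is `[[x₃, 0, -x₁], [0, λx₃, -λx₂], [0, 0, 0]]`,
the sum of two one-row matrices `M`, `N` with `MN = NM = 0`, `M² = x₃M` and `N² = λx₃N`. An
element with `Y² = aY` has `exp Y = 1 + φ(a) Y`, where `φ(a) = exprel a = (eᵃ - 1)/a > 0`, so
`F ∘ exp(ad_X) = (f₁e^{x₃}, f₂e^{λx₃}, f₃ - f₁x₁φ(x₃) - λf₂x₂φ(λx₃))`. Putting `s = e^{x₃}` gives
the first two coordinates; the third is affine in `(x₁, x₂)`, and non-constant as soon as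
`(f₁, f₂) ≠ 0` (because `λ ≠ 0`), so it takes every value `t`.
-/

open NormedSpace Nat

noncomputable def exprel (a : ℝ) : ℝ := if a = 0 then 1 else (Real.exp a - 1) / a

theorem exprel_pos (a : ℝ) : 0 < exprel a := by
  unfold exprel
  split_ifs with h
  · exact one_pos
  · rcases lt_or_gt_of_ne h with ha | ha
    · exact div_pos_of_neg_of_neg (by linarith [Real.exp_lt_one_iff.mpr ha]) ha
    · exact div_pos (by linarith [Real.one_lt_exp_iff.mpr ha]) ha

theorem one_add_mul_exprel (a : ℝ) : 1 + a * exprel a = Real.exp a := by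
  unfold exprel
  split_ifs with h
  · simp [h]
  · field_simp
    ring

theorem hasSum_exprel (a : ℝ) : HasSum (fun n : ℕ => a ^ n / (n + 1)!) (exprel a) := by
  unfold exprel
  split_ifs with ha
  · subst ha
    convert hasSum_ite_eq 0 (1 : ℝ) using 2 with n
    cases n <;> simp
  · have hexp := (hasSum_nat_add_iff' 1).mpr (Real.exp_eq_exp_ℝ ▸ expSeries_div_hasSum_exp a)
    rw [Finset.sum_range_one, pow_zero, factorial_zero, cast_one, div_one] at hexp
    have hterm : (fun n : ℕ => a ^ n / (n + 1)!) = fun n => a ^ (n + 1) / (n + 1)! / a := by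
      funext n
      rw [pow_succ]
      field_simp
    rw [hterm]
    exact hexp.div_const a

section

variable {A : Type*} [Ring A] [Algebra ℝ A]

theorem pow_succ_eq_smul_of_mul_self_eq_smul {a : ℝ} {x : A} (h : x * x = a • x) (n : ℕ) :
    x ^ (n + 1) = a ^ n • x := by
  induction n with
  | zero => simp
  | succ n ih => rw [pow_succ, ih, smul_mul_assoc, h, smul_smul, pow_succ]

variable [TopologicalSpace A] [IsTopologicalRing A] [ContinuousSMul ℝ A] [T2Space A]

theorem exp_eq_one_add_exprel_smul {a : ℝ} {x : A} (h : x * x = a • x) :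
    exp x = 1 + exprel a • x := by
  have htail : HasSum (fun n : ℕ => ((n + 1)!⁻¹ : ℝ) • x ^ (n + 1)) (exprel a • x) := by
    convert (hasSum_exprel a).smul_const x using 2 with n
    rw [pow_succ_eq_smul_of_mul_self_eq_smul h, smul_smul, div_eq_inv_mul]
  rw [exp_eq_tsum ℝ]
  simpa using (HasSum.zero_add (f := fun n : ℕ => (n !⁻¹ : ℝ) • x ^ n) htail).tsum_eq

end

theorem Matrix.exp_add_eq_of_mul_eq_zero {m : Type*} [Fintype m] [DecidableEq m] {a c : ℝ}
    {x y : Matrix m m ℝ} (hx : x * x = a • x) (hy : y * y = c • y) (hxy : x * y = 0)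
    (hyx : y * x = 0) : exp (x + y) = 1 + exprel a • x + exprel c • y := by
  rw [Matrix.exp_add_of_commute _ _ (hxy.trans hyx.symm), exp_eq_one_add_exprel_smul hx,
    exp_eq_one_add_exprel_smul hy]
  simp [add_mul, mul_add, hxy, add_assoc]

theorem Matrix.exp_affine_diag_fin_three (a c u v : ℝ) :
    exp !![a, 0, u; 0, c, v; 0, 0, 0] =
      !![Real.exp a, 0, u * exprel a; 0, Real.exp c, v * exprel c; 0, 0, 1] := by
  have hsplit : !![a, 0, u; 0, c, v; 0, 0, 0] =
      !![a, 0, u; 0, 0, 0; 0, 0, 0] + !![0, 0, 0; 0, c, v; 0, 0, 0] := by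
    ext i j; fin_cases i <;> fin_cases j <;> simp
  rw [hsplit, Matrix.exp_add_eq_of_mul_eq_zero (a := a) (c := c)]
  all_goals ext i j; fin_cases i <;> fin_cases j <;>
    simp [Matrix.mul_apply, Fin.sum_univ_three, ← one_add_mul_exprel, mul_comm]

noncomputable def coadjointActionG31 (lam : ℝ) (x f : Fin 3 → ℝ) : Fin 3 → ℝ :=
  ![f 0 * Real.exp (x 2), f 1 * Real.exp (lam * x 2),
    f 2 - f 0 * x 0 * exprel (x 2) - f 1 * (lam * x 1) * exprel (lam * x 2)]

section

variable {lam : ℝ} {L : Type*} [LieRing L] [LieAlgebra ℝ L] {b : Module.Basis (Fin 3) ℝ L}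

theorem toMatrix_ad_equivFun_symm (h31 : ⁅b 2, b 0⁆ = b 0) (h32 : ⁅b 2, b 1⁆ = lam • b 1)
    (h12 : ⁅b 0, b 1⁆ = 0) (x : Fin 3 → ℝ) :
    LinearMap.toMatrix b b (LieAlgebra.ad ℝ L (b.equivFun.symm x)) =
      !![x 2, 0, -x 0; 0, lam * x 2, -(lam * x 1); 0, 0, 0] := by
  have h02 : ⁅b 0, b 2⁆ = -b 0 := by rw [← lie_skew, h31]
  have h12' : ⁅b 1, b 2⁆ = -(lam • b 1) := by rw [← lie_skew, h32]
  have h21 : ⁅b 1, b 0⁆ = 0 := by rw [← lie_skew, h12, neg_zero]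
  ext i j
  rw [LinearMap.toMatrix_apply, LieAlgebra.ad_apply, Module.Basis.equivFun_symm_apply,
    Fin.sum_univ_three]
  fin_cases i <;> fin_cases j <;>
    simp [add_lie, smul_lie, h31, h32, h12, h02, h12', h21, mul_comm]

theorem vecMul_exp_toMatrix_ad (h31 : ⁅b 2, b 0⁆ = b 0) (h32 : ⁅b 2, b 1⁆ = lam • b 1)
    (h12 : ⁅b 0, b 1⁆ = 0) (f x : Fin 3 → ℝ) :
    Matrix.vecMul f (exp (LinearMap.toMatrix b b (LieAlgebra.ad ℝ L (b.equivFun.symm x)))) =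
      coadjointActionG31 lam x f := by
  rw [toMatrix_ad_equivFun_symm h31 h32 h12, Matrix.exp_affine_diag_fin_three]
  ext j
  fin_cases j <;> simp [coadjointActionG31, Matrix.vecMul, dotProduct, Fin.sum_univ_three]
  ring

theorem coadjointOrbit_eq_range (h31 : ⁅b 2, b 0⁆ = b 0) (h32 : ⁅b 2, b 1⁆ = lam • b 1)
    (h12 : ⁅b 0, b 1⁆ = 0) (f : Fin 3 → ℝ) :
    { y | ∃ X : L, y = Matrix.vecMul f (exp (LinearMap.toMatrix b b (LieAlgebra.ad ℝ L X))) } =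
      Set.range (coadjointActionG31 lam · f) := by
  ext y
  simp only [Set.mem_ofPred_eq, Set.mem_range, b.equivFun.symm.surjective.exists,
    vecMul_exp_toMatrix_ad h31 h32 h12, eq_comm]

end

theorem range_coadjointActionG31_of_eq_zero {lam : ℝ} {f : Fin 3 → ℝ} (h0 : f 0 = 0)
    (h1 : f 1 = 0) : Set.range (coadjointActionG31 lam · f) = {f} := by
  have hconst : (coadjointActionG31 lam · f) = fun _ => f := by
    funext x j
    fin_cases j <;> simp [coadjointActionG31, h0, h1]
  rw [hconst, Set.range_const]

theorem range_coadjointActionG31 {lam : ℝ} (hlam : lam ≠ 0) {f : Fin 3 → ℝ}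
    (hf : ¬(f 0 = 0 ∧ f 1 = 0)) :
    Set.range (coadjointActionG31 lam · f) =
      { y | ∃ s t : ℝ, 0 < s ∧ y = ![f 0 * s, f 1 * Real.exp (lam * Real.log s), t] } := by
  ext y
  constructor
  · rintro ⟨x, rfl⟩
    exact ⟨Real.exp (x 2), coadjointActionG31 lam x f 2, Real.exp_pos _, by
      ext j; fin_cases j <;> simp [coadjointActionG31]⟩
  · rintro ⟨s, t, hs, rfl⟩
    have hexp : Real.exp (Real.log s) = s := Real.exp_log hs
    by_cases h0 : f 0 = 0
    · have h1 : f 1 ≠ 0 := fun h1 => hf ⟨h0, h1⟩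
      refine ⟨![0, (f 2 - t) / (f 1 * lam * exprel (lam * Real.log s)), Real.log s], ?_⟩
      ext j
      fin_cases j <;> simp [coadjointActionG31, hexp, h0]
      field_simp [(exprel_pos (lam * Real.log s)).ne']
      ring
    · refine ⟨![(f 2 - t) / (f 0 * exprel (Real.log s)), 0, Real.log s], ?_⟩
      ext j
      fin_cases j <;> simp [coadjointActionG31, hexp]
      field_simp [(exprel_pos (Real.log s)).ne']
      ring

theorem stmt_8_general (lam : ℝ) (hlam0 : 0 < |lam|)
    (L : Type) [LieRing L] [LieAlgebra ℝ L] (b : Module.Basis (Fin 3) ℝ L)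
    (h31 : ⁅b 2, b 0⁆ = b 0) (h32 : ⁅b 2, b 1⁆ = lam • b 1) (h12 : ⁅b 0, b 1⁆ = 0)
    (f : Fin 3 → ℝ) (Ω : Set (Fin 3 → ℝ))
    (hΩ : Ω = { y | ∃ X : L,
      y = Matrix.vecMul f (NormedSpace.exp ((LinearMap.toMatrix b b) (LieAlgebra.ad ℝ L X))) }) :
    (f 0 = 0 ∧ f 1 = 0 → Ω = {f}) ∧
    (¬ (f 0 = 0 ∧ f 1 = 0) →
      Ω = { y | ∃ s t : ℝ, 0 < s ∧
        y = ![f 0 * s, f 1 * Real.exp (lam * Real.log s), t] }) := by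
  rw [hΩ, coadjointOrbit_eq_range h31 h32 h12]
  exact ⟨fun ⟨h0, h1⟩ => range_coadjointActionG31_of_eq_zero h0 h1,
    range_coadjointActionG31 (abs_pos.mp hlam0)⟩

/-- coadjoint orbit picture for `G_{3,1(λ)}`. -/
theorem stmt_8 (lam : ℝ) (hlam0 : 0 < |lam|) (hlam1 : |lam| ≤ 1)
    (L : Type) [LieRing L] [LieAlgebra ℝ L] (b : Module.Basis (Fin 3) ℝ L)
    (h31 : ⁅b 2, b 0⁆ = b 0) (h32 : ⁅b 2, b 1⁆ = lam • b 1) (h12 : ⁅b 0, b 1⁆ = 0)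
    (f : Fin 3 → ℝ) (Ω : Set (Fin 3 → ℝ))
    (hΩ : Ω = { y | ∃ X : L,
      y = Matrix.vecMul f (NormedSpace.exp ((LinearMap.toMatrix b b) (LieAlgebra.ad ℝ L X))) }) :
    (f 0 = 0 ∧ f 1 = 0 → Ω = {f}) ∧
    (¬ (f 0 = 0 ∧ f 1 = 0) →
      Ω = { y | ∃ s t : ℝ, 0 < s ∧
        y = ![f 0 * s, f 1 * Real.exp (lam * Real.log s), t] }) :=
  stmt_8_general lam hlam0 L b h31 h32 h12 f Ω hΩ
end

section
/- Let G = G_{3,2} and let F = (f1,f2,f3) ∈ G* ≅ ℝ³. If f1 = f2 = 0 then Ω_F(G) = {F}. If (f1,f2) ≠ (0,0) then Ω_F(G) = { (f1·e^s, (f1·s + f2)·e^s, t) : s,t ∈ ℝ }. -/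
/-!
In the basis `X₁, X₂, X₃`, the matrix `M` of `ad (x₁X₁ + x₂X₂ + sX₃)` satisfies `M² = sM + sN` and
`NM = sN` for a nilpotent `N`, so the exponential series collapses to
`exp M = 1 + φ₁(s) M + (eˢ - φ₁(s)) N` with `φ₁(s) = (eˢ - 1)/s`. Hence `F ∘ exp (ad X)` has first
coordinates `f₁eˢ, (f₁s + f₂)eˢ`, and third coordinate `f₃` plus a linear form in `(x₁, x₂)` which
is onto `ℝ` as soon as `(f₁, f₂) ≠ 0`, because `φ₁` has no zeros.
-/

open NormedSpace Matrix Nat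

noncomputable section

/-- `φ₁(s) = (eˢ - 1) / s`, with the removable singularity filled in by `φ₁(0) = 1`. -/
def phi1 (s : ℝ) : ℝ := ∑' n : ℕ, s ^ n / (n + 1)!

lemma hasSum_phi1 (s : ℝ) : HasSum (fun n : ℕ => s ^ n / (n + 1)!) (phi1 s) := by
  refine Summable.hasSum <| (Real.summable_pow_div_factorial |s|).of_norm_bounded fun n => ?_
  rw [Real.norm_eq_abs, abs_div, abs_pow, Nat.abs_cast]
  gcongr
  exact n.le_succ

lemma hasSum_pow_div_factorial_exp (s : ℝ) : HasSum (fun n : ℕ => s ^ n / n !) (Real.exp s) :=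
  Real.exp_eq_exp_ℝ ▸ expSeries_div_hasSum_exp s

lemma mul_phi1 (s : ℝ) : s * phi1 s = Real.exp s - 1 := by
  have h := (hasSum_nat_add_iff' 1).mpr (hasSum_pow_div_factorial_exp s)
  refine ((hasSum_phi1 s).mul_left s).unique ?_
  simpa [pow_succ, mul_div_assoc, mul_comm] using h

lemma phi1_zero : phi1 0 = 1 := by
  rw [phi1, tsum_eq_single 0] <;> simp +contextual

lemma phi1_ne_zero (s : ℝ) : phi1 s ≠ 0 := by
  rcases eq_or_ne s 0 with rfl | hs
  · simp [phi1_zero]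
  · intro h
    have := mul_phi1 s
    rw [h, mul_zero, eq_comm, sub_eq_zero, Real.exp_eq_one_iff] at this
    exact hs this

section
variable {𝔸 : Type*} [Ring 𝔸] [Algebra ℝ 𝔸] {x y : 𝔸} {s : ℝ}

lemma pow_succ_eq_of_mul_self_eq (hx : x * x = s • x + s • y) (hy : y * x = s • y) (n : ℕ) :
    x ^ (n + 1) = s ^ n • x + (n * s ^ n) • y := by
  induction n with
  | zero => simp
  | succ n ih =>
    rw [pow_succ, ih, add_mul, smul_mul_assoc, smul_mul_assoc, hx, hy, smul_add, smul_smul,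
      smul_smul, smul_smul]
    match_scalars <;> ring

theorem exp_eq_of_mul_self_eq [TopologicalSpace 𝔸] [IsTopologicalRing 𝔸] [ContinuousSMul ℝ 𝔸]
    [T2Space 𝔸] (hx : x * x = s • x + s • y) (hy : y * x = s • y) :
    exp x = 1 + phi1 s • x + (Real.exp s - phi1 s) • y := by
  have hcoeff := ((hasSum_phi1 s).smul_const x).add
    (((hasSum_pow_div_factorial_exp s).sub (hasSum_phi1 s)).smul_const y)
  have hterm (n : ℕ) : ((n + 1)! : ℝ)⁻¹ • x ^ (n + 1) =
      (s ^ n / (n + 1)!) • x + (s ^ n / (n ! : ℝ) - s ^ n / (n + 1)!) • y := by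
    rw [pow_succ_eq_of_mul_self_eq hx hy, smul_add, smul_smul, smul_smul]
    match_scalars
    · ring
    · rw [Nat.factorial_succ]; push_cast; field_simp; ring
  have hseries : HasSum (fun n : ℕ => (n ! : ℝ)⁻¹ • x ^ n)
      (1 + phi1 s • x + (Real.exp s - phi1 s) • y) := by
    refine (hasSum_nat_add_iff' 1).mp ?_
    simpa [hterm, add_assoc] using hcoeff
  rw [exp_eq_tsum ℝ]
  exact hseries.tsum_eq

end

def adMat (s p q : ℝ) : Matrix (Fin 3) (Fin 3) ℝ := !![s, s, p; 0, s, q; 0, 0, 0]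

def adMatNil (s q : ℝ) : Matrix (Fin 3) (Fin 3) ℝ := !![0, s, q; 0, 0, 0; 0, 0, 0]

lemma adMat_mul_self (s p q : ℝ) :
    adMat s p q * adMat s p q = s • adMat s p q + s • adMatNil s q := by
  ext i j
  fin_cases i <;> fin_cases j <;> simp [adMat, adMatNil]

lemma adMatNil_mul_adMat (s p q : ℝ) : adMatNil s q * adMat s p q = s • adMatNil s q := by
  ext i j
  fin_cases i <;> fin_cases j <;> simp [adMat, adMatNil]

lemma vecMul_exp_adMat (f : Fin 3 → ℝ) (s p q : ℝ) :
    vecMul f (exp (adMat s p q)) = ![f 0 * Real.exp s, (f 0 * s + f 1) * Real.exp s,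
      f 0 * (phi1 s * p + (Real.exp s - phi1 s) * q) + f 1 * (phi1 s * q) + f 2] := by
  rw [exp_eq_of_mul_self_eq (adMat_mul_self s p q) (adMatNil_mul_adMat s p q)]
  have h := mul_phi1 s
  ext j
  fin_cases j <;> simp [vecMul, dotProduct, Fin.sum_univ_three, adMat, adMatNil, one_apply]
  · left; linarith
  · linear_combination f 1 * h

section
variable {L : Type*} [LieRing L] [LieAlgebra ℝ L] {b : Module.Basis (Fin 3) ℝ L}

lemma toMatrix_ad (h31 : ⁅b 2, b 0⁆ = b 0) (h32 : ⁅b 2, b 1⁆ = b 0 + b 1) (h12 : ⁅b 0, b 1⁆ = 0)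
    (X : L) : LinearMap.toMatrix b b (LieAlgebra.ad ℝ L X) =
      adMat (b.repr X 2) (-(b.repr X 0 + b.repr X 1)) (-b.repr X 1) := by
  set x := b.repr X
  have hX : X = x 0 • b 0 + x 1 • b 1 + x 2 • b 2 := by
    have := b.sum_repr X
    rw [Fin.sum_univ_three] at this
    exact this.symm
  have h21 : ⁅b 1, b 0⁆ = 0 := by rw [← lie_skew, h12, neg_zero]
  have h13 : ⁅b 0, b 2⁆ = -b 0 := by rw [← lie_skew, h31]
  have h23 : ⁅b 1, b 2⁆ = -(b 0 + b 1) := by rw [← lie_skew, h32]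
  have ad0 : ⁅X, b 0⁆ = x 2 • b 0 := by
    simp [hX, add_lie, smul_lie, h21, h31]
  have ad1 : ⁅X, b 1⁆ = x 2 • b 0 + x 2 • b 1 := by
    simp [hX, add_lie, smul_lie, h12, h32, smul_add]
  have ad2 : ⁅X, b 2⁆ = (-(x 0 + x 1)) • b 0 + (-x 1) • b 1 := by
    rw [hX]
    simp only [add_lie, smul_lie, h13, h23, lie_self, smul_zero, add_zero]
    module
  ext i j
  rw [LinearMap.toMatrix_apply, LieAlgebra.ad_apply]
  fin_cases j <;> fin_cases i <;> simp [ad0, ad1, ad2, adMat]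

lemma coadjointOrbit_eq (h31 : ⁅b 2, b 0⁆ = b 0) (h32 : ⁅b 2, b 1⁆ = b 0 + b 1)
    (h12 : ⁅b 0, b 1⁆ = 0) (f : Fin 3 → ℝ) :
    { y | ∃ X : L, y = vecMul f (exp (LinearMap.toMatrix b b (LieAlgebra.ad ℝ L X))) } =
      { y | ∃ s p q : ℝ, y = ![f 0 * Real.exp s, (f 0 * s + f 1) * Real.exp s,
        f 0 * (phi1 s * p + (Real.exp s - phi1 s) * q) + f 1 * (phi1 s * q) + f 2] } := by
  ext y
  simp only [Set.mem_ofPred_eq, toMatrix_ad h31 h32 h12, vecMul_exp_adMat]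
  constructor
  · rintro ⟨X, rfl⟩
    exact ⟨_, _, _, rfl⟩
  · rintro ⟨s, p, q, rfl⟩
    refine ⟨(q - p) • b 0 + (-q) • b 1 + s • b 2, ?_⟩
    simp

end

lemma exists_coadjoint_coord_eq {a c f₀ f₁ : ℝ} (ha : a ≠ 0) (hf : ¬(f₀ = 0 ∧ f₁ = 0)) (t : ℝ) :
    ∃ p q : ℝ, f₀ * (a * p + c * q) + f₁ * (a * q) = t := by
  by_cases h₀ : f₀ = 0
  · have h₁ : f₁ ≠ 0 := fun h₁ => hf ⟨h₀, h₁⟩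
    exact ⟨0, t / (a * f₁), by rw [h₀]; field_simp; ring⟩
  · exact ⟨t / (a * f₀), 0, by field_simp; ring⟩

end

/-- coadjoint orbit picture for `G_{3,2}` (`[X3,X1]=X1`, `[X3,X2]=X1+X2`).
`Ω_F(G) = {F ∘ exp(ad_X) : X ∈ G}` in the coordinates of the dual basis. -/
theorem stmt_9 (L : Type) [LieRing L] [LieAlgebra ℝ L] (b : Module.Basis (Fin 3) ℝ L)
    (h31 : ⁅b 2, b 0⁆ = b 0) (h32 : ⁅b 2, b 1⁆ = b 0 + b 1) (h12 : ⁅b 0, b 1⁆ = 0)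
    (f : Fin 3 → ℝ) (Ω : Set (Fin 3 → ℝ))
    (hΩ : Ω = { y | ∃ X : L,
      y = Matrix.vecMul f (NormedSpace.exp ((LinearMap.toMatrix b b) (LieAlgebra.ad ℝ L X))) }) :
    (f 0 = 0 ∧ f 1 = 0 → Ω = {f}) ∧
    (¬ (f 0 = 0 ∧ f 1 = 0) →
      Ω = { y | ∃ s t : ℝ,
        y = ![f 0 * Real.exp s, (f 0 * s + f 1) * Real.exp s, t] }) := by
  rw [hΩ, coadjointOrbit_eq h31 h32 h12]
  refine ⟨fun ⟨h0, h1⟩ => ?_, fun hf => ?_⟩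
  · simp only [h0, h1, zero_mul, zero_add, add_zero, exists_const, Set.ofPred_eq_eq_singleton,
      Set.singleton_eq_singleton_iff]
    ext j
    fin_cases j <;> simp [h0, h1]
  · ext y
    constructor
    · rintro ⟨s, p, q, rfl⟩
      exact ⟨s, _, rfl⟩
    · rintro ⟨s, t, rfl⟩
      obtain ⟨p, q, hpq⟩ :=
        exists_coadjoint_coord_eq (c := Real.exp s - phi1 s) (phi1_ne_zero s) hf (t - f 2)
      exact ⟨s, p, q, by rw [hpq, sub_add_cancel]⟩
end

section
/- Let G = G_{3,3(λ)} (λ ≥ 0) and let F = (f1,f2,f3) ∈ G* ≅ ℝ³. If f1 = f2 = 0 then Ω_F(G) = {F}. If (f1,f2) ≠ (0,0) then Ω_F(G) = { ( e^{λs}(f1 cos s − f2 sin s), e^{λs}(f1 sin s + f2 cos s), t ) : s,t ∈ ℝ }; equivalently, identifying ℝ³ with ℂ×ℝ via (x1,x2,x3) ↦ (x1+ix2, x3), Ω_F(G) = { ( (f1+if2)·e^{(λ+i)s}, t ) : s,t ∈ ℝ }. -/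
/-!
In the basis `b`, the matrix of `ad X` for `X = x₀ b₀ + x₁ b₁ + s b₂` is that of the real-linear
map `(ζ, r) ↦ (d ζ + r w, 0)` of `ℂ × ℝ`, where `d = s (λ - i)` and `w = -(λ - i) (x₀ + i x₁)`.
Its `n`-th power (`n ≥ 1`) is `(ζ, r) ↦ (dⁿ ζ + r dⁿ⁻¹ w, 0)`, so its exponential is
`(ζ, r) ↦ (e^d ζ + r φ(d) w, r)` with `φ(d) = (e^d - 1) / d`. Under `F ↦ F ∘ exp(ad X)` the
complex part `f₁ + i f₂` of `F` is multiplied by `conj (e^d) = e^{(λ + i) s}`, and the third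
coordinate is shifted by `Re ((f₁ + i f₂) · conj (φ(d) w))`. As `w` ranges over `ℂ`, this shift
is arbitrary once `f₁ + i f₂ ≠ 0` and `φ(d) ≠ 0`; and if `φ(d) = 0` then `e^d = 1`, so `s` may be
replaced by `0`.
-/

open Complex Nat ComplexConjugate Matrix

noncomputable section

/-- `(exp d - 1) / d`, given by its power series so that its value at `0` is `1`. -/
def expSubOneDiv (d : ℂ) : ℂ := ∑' k : ℕ, ((k + 1)! : ℂ)⁻¹ * d ^ k

lemma hasSum_expSubOneDiv (d : ℂ) :
    HasSum (fun k : ℕ => ((k + 1)! : ℂ)⁻¹ * d ^ k) (expSubOneDiv d) := by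
  refine Summable.hasSum (Summable.of_norm_bounded (Real.summable_pow_div_factorial ‖d‖) ?_)
  intro k
  rw [norm_mul, norm_inv, norm_natCast, norm_pow, div_eq_inv_mul]
  gcongr
  exact k.le_succ

lemma hasSum_exp_sub_one (d : ℂ) :
    HasSum (fun k : ℕ => ((k + 1)! : ℂ)⁻¹ * d ^ (k + 1)) (exp d - 1) := by
  have h := NormedSpace.exp_series_hasSum_exp' (𝕂 := ℂ) d
  rw [← exp_eq_exp_ℂ, ← hasSum_nat_add_iff' 1] at h
  simpa using h

lemma mul_expSubOneDiv (d : ℂ) : d * expSubOneDiv d = exp d - 1 := by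
  refine ((hasSum_expSubOneDiv d).mul_left d).unique ?_
  convert hasSum_exp_sub_one d using 1
  · rfl
  · funext k
    ring

lemma expSubOneDiv_zero : expSubOneDiv 0 = 1 := by
  simpa using
    (hasSum_expSubOneDiv 0).tsum_eq.symm.trans (tsum_eq_single 0 fun k hk => by simp [hk])

/-- The matrix of `(ζ, r) ↦ (d ζ + r w, 0)` on `ℂ × ℝ ≅ ℝ³`. -/
def affineMatrix (d w : ℂ) : Matrix (Fin 3) (Fin 3) ℝ :=
  !![d.re, -d.im, w.re; d.im, d.re, w.im; 0, 0, 0]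

lemma affineMatrix_mul (a u d w : ℂ) :
    affineMatrix a u * affineMatrix d w = affineMatrix (a * d) (a * w) := by
  ext i j
  fin_cases i <;> fin_cases j <;> simp [affineMatrix, Matrix.mul_apply, Fin.sum_univ_three] <;> ring

lemma affineMatrix_pow_succ (d w : ℂ) (k : ℕ) :
    affineMatrix d w ^ (k + 1) = affineMatrix (d ^ (k + 1)) (d ^ k * w) := by
  induction k with
  | zero => simp
  | succ k ih => rw [pow_succ' (affineMatrix d w), ih, affineMatrix_mul]; congr 1 <;> ring

lemma smul_affineMatrix (r : ℝ) (d w : ℂ) :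
    r • affineMatrix d w = affineMatrix (r * d) (r * w) := by
  ext i j
  fin_cases i <;> fin_cases j <;> simp [affineMatrix]

def affineMatrixₗ : ℂ × ℂ →ₗ[ℝ] Matrix (Fin 3) (Fin 3) ℝ where
  toFun p := affineMatrix p.1 p.2
  map_add' p q := by ext i j; fin_cases i <;> fin_cases j <;> simp [affineMatrix, add_comm]
  map_smul' c p := by ext i j; fin_cases i <;> fin_cases j <;> simp [affineMatrix]

lemma exp_affineMatrix (d w : ℂ) :
    NormedSpace.exp (affineMatrix d w) = 1 + affineMatrix (exp d - 1) (expSubOneDiv d * w) := by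
  have hpair := (hasSum_exp_sub_one d).prodMk ((hasSum_expSubOneDiv d).mul_right w)
  have hmat : HasSum (fun k : ℕ => ((k + 1)! : ℝ)⁻¹ • affineMatrix d w ^ (k + 1))
      (affineMatrix (exp d - 1) (expSubOneDiv d * w)) := by
    convert hpair.map affineMatrixₗ (LinearMap.continuous_of_finiteDimensional _) using 1
    · funext k
      rw [Function.comp_apply, affineMatrix_pow_succ, smul_affineMatrix]
      push_cast
      rw [mul_assoc]
      rfl
    · rfl
  rw [NormedSpace.exp_eq_tsum ℝ]
  refine HasSum.tsum_eq ?_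
  rw [← hasSum_nat_add_iff' 1]
  simpa using hmat

def complexPart (y : Fin 3 → ℝ) : ℂ := y 0 + y 1 * I

lemma complexPart_add (y z : Fin 3 → ℝ) : complexPart (y + z) = complexPart y + complexPart z := by
  simp only [complexPart, Pi.add_apply, ofReal_add]
  ring

lemma ext_complexPart {y z : Fin 3 → ℝ} :
    y = z ↔ complexPart y = complexPart z ∧ y 2 = z 2 := by
  refine ⟨fun h => h ▸ ⟨rfl, rfl⟩, fun ⟨h, h2⟩ => ?_⟩
  simp only [complexPart, Complex.ext_iff, add_re, ofReal_re, mul_re, I_re, I_im, ofReal_im,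
    add_im, mul_im] at h
  ext i
  fin_cases i <;> simp_all

lemma complexPart_eq_zero_iff {y : Fin 3 → ℝ} : complexPart y = 0 ↔ y 0 = 0 ∧ y 1 = 0 := by
  simp [complexPart, Complex.ext_iff]

lemma complexPart_mul_exp (y : Fin 3 → ℝ) (lam s t : ℝ) :
    complexPart y * exp ((lam + I) * s) =
      complexPart ![Real.exp (lam * s) * (y 0 * Real.cos s - y 1 * Real.sin s),
        Real.exp (lam * s) * (y 0 * Real.sin s + y 1 * Real.cos s), t] := by
  apply Complex.ext <;> simp [complexPart, exp_re, exp_im, cos_ofReal_re, sin_ofReal_re] <;> ring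

lemma complexPart_vecMul_affineMatrix (f : Fin 3 → ℝ) (a u : ℂ) :
    complexPart (f ᵥ* affineMatrix a u) = complexPart f * conj a := by
  apply Complex.ext <;>
    simp [complexPart, affineMatrix, Matrix.vecMul, dotProduct, Fin.sum_univ_three]

lemma vecMul_affineMatrix_apply_two (f : Fin 3 → ℝ) (a u : ℂ) :
    (f ᵥ* affineMatrix a u) 2 = (complexPart f * conj u).re := by
  simp [complexPart, affineMatrix, Matrix.vecMul, dotProduct, Fin.sum_univ_three]

lemma complexPart_vecMul_exp_affineMatrix (f : Fin 3 → ℝ) (d w : ℂ) :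
    complexPart (f ᵥ* NormedSpace.exp (affineMatrix d w)) = complexPart f * exp (conj d) := by
  rw [exp_affineMatrix, vecMul_add, vecMul_one, complexPart_add, complexPart_vecMul_affineMatrix,
    map_sub, map_one, exp_conj]
  ring

lemma vecMul_exp_affineMatrix_apply_two (f : Fin 3 → ℝ) (d w : ℂ) :
    (f ᵥ* NormedSpace.exp (affineMatrix d w)) 2 =
      f 2 + (complexPart f * conj (expSubOneDiv d * w)).re := by
  rw [exp_affineMatrix, vecMul_add, vecMul_one, Pi.add_apply, vecMul_affineMatrix_apply_two]

lemma exists_exp_eq_expSubOneDiv_ne_zero (c : ℂ) (s : ℝ) :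
    ∃ s' : ℝ, exp (s' * c) = exp (s * c) ∧ expSubOneDiv (s' * c) ≠ 0 := by
  by_cases hs : expSubOneDiv (s * c) = 0
  · refine ⟨0, ?_, by simp [expSubOneDiv_zero]⟩
    have h := mul_expSubOneDiv (s * c)
    rw [hs, mul_zero, eq_comm, sub_eq_zero] at h
    rw [h, ofReal_zero, zero_mul, exp_zero]
  · exact ⟨s, rfl, hs⟩

lemma Module.Basis.exists_repr_eq {V : Type*} [AddCommGroup V] [Module ℝ V]
    (b : Module.Basis (Fin 3) ℝ V) (z : ℂ) (s : ℝ) :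
    ∃ X : V, (b.repr X 0 + b.repr X 1 * I : ℂ) = z ∧ b.repr X 2 = s := by
  refine ⟨b.equivFun.symm ![z.re, z.im, s], ?_, ?_⟩ <;>
    simp only [← b.equivFun_apply, LinearEquiv.apply_symm_apply] <;> simp [re_add_im]

section LieAlgebra

variable {lam : ℝ} {L : Type*} [LieRing L] [LieAlgebra ℝ L] {b : Module.Basis (Fin 3) ℝ L}

structure IsG33Basis (lam : ℝ) (b : Module.Basis (Fin 3) ℝ L) : Prop where
  lie_two_zero : ⁅b 2, b 0⁆ = lam • b 0 - b 1
  lie_two_one : ⁅b 2, b 1⁆ = b 0 + lam • b 1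
  lie_zero_one : ⁅b 0, b 1⁆ = 0

lemma IsG33Basis.toMatrix_ad (hb : IsG33Basis lam b) (X : L) :
    LinearMap.toMatrix b b (LieAlgebra.ad ℝ L X) =
      affineMatrix (b.repr X 2 * (lam - I)) (-((lam - I) * (b.repr X 0 + b.repr X 1 * I))) := by
  obtain ⟨h20, h21, h01⟩ := hb
  have h10 : ⁅b 1, b 0⁆ = 0 := by rw [← lie_skew, h01, neg_zero]
  have h02 : ⁅b 0, b 2⁆ = -(lam • b 0 - b 1) := by rw [← lie_skew, h20]
  have h12 : ⁅b 1, b 2⁆ = -(b 0 + lam • b 1) := by rw [← lie_skew, h21]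
  ext i j
  rw [LinearMap.toMatrix_apply, LieAlgebra.ad_apply]
  conv_lhs => rw [← b.sum_repr X]
  rw [Fin.sum_univ_three]
  fin_cases j <;> fin_cases i <;>
    simp [add_lie, smul_lie, h20, h21, h01, h10, h02, h12, affineMatrix] <;> ring

lemma complexPart_vecMul_exp_ad (hb : IsG33Basis lam b) (f : Fin 3 → ℝ) (X : L) :
    complexPart (f ᵥ* NormedSpace.exp (LinearMap.toMatrix b b (LieAlgebra.ad ℝ L X))) =
      complexPart f * exp ((lam + I) * b.repr X 2) := by
  rw [hb.toMatrix_ad, complexPart_vecMul_exp_affineMatrix]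
  congr 2
  simp only [map_mul, map_sub, conj_ofReal, conj_I]
  ring

lemma vecMul_exp_ad_apply_two (hb : IsG33Basis lam b) (f : Fin 3 → ℝ) (X : L) :
    (f ᵥ* NormedSpace.exp (LinearMap.toMatrix b b (LieAlgebra.ad ℝ L X))) 2 =
      f 2 + (complexPart f * conj (expSubOneDiv (b.repr X 2 * (lam - I)) *
        -((lam - I) * (b.repr X 0 + b.repr X 1 * I)))).re := by
  rw [hb.toMatrix_ad, vecMul_exp_affineMatrix_apply_two]

lemma mem_coadjointOrbit_iff_of_eq_zero (hb : IsG33Basis lam b) {f : Fin 3 → ℝ}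
    (hf : complexPart f = 0) (y : Fin 3 → ℝ) :
    (∃ X : L, y = f ᵥ* NormedSpace.exp (LinearMap.toMatrix b b (LieAlgebra.ad ℝ L X))) ↔
      y = f := by
  refine ⟨?_, fun hy => ⟨0, by simp [hy]⟩⟩
  rintro ⟨X, rfl⟩
  rw [ext_complexPart, complexPart_vecMul_exp_ad hb, vecMul_exp_ad_apply_two hb, hf]
  simp

lemma mem_coadjointOrbit_iff_of_ne_zero (hb : IsG33Basis lam b) {f : Fin 3 → ℝ}
    (hf : complexPart f ≠ 0) (y : Fin 3 → ℝ) :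
    (∃ X : L, y = f ᵥ* NormedSpace.exp (LinearMap.toMatrix b b (LieAlgebra.ad ℝ L X))) ↔
      ∃ s : ℝ, complexPart y = complexPart f * exp ((lam + I) * s) := by
  refine ⟨fun ⟨X, hX⟩ => ⟨b.repr X 2, hX ▸ complexPart_vecMul_exp_ad hb f X⟩, ?_⟩
  rintro ⟨s, hs⟩
  have hc : (lam : ℂ) - I ≠ 0 := by
    intro h
    simpa using congrArg im h
  obtain ⟨s', hexp, hG⟩ := exists_exp_eq_expSubOneDiv_ne_zero ((lam : ℂ) - I) s
  have hexp' : exp ((lam + I) * s') = exp ((lam + I) * s) := by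
    have h := congrArg conj hexp
    simp only [← exp_conj, map_mul, map_sub, conj_ofReal, conj_I, sub_neg_eq_add] at h
    rwa [mul_comm _ (s' : ℂ), mul_comm _ (s : ℂ)]
  set v : ℂ := ((y 2 - f 2 : ℝ) : ℂ) / conj (complexPart f)
  obtain ⟨X, hXz, hX2⟩ := b.exists_repr_eq (-(v / (expSubOneDiv (s' * (lam - I)) * (lam - I)))) s'
  refine ⟨X, ext_complexPart.2 ⟨?_, ?_⟩⟩
  · rw [complexPart_vecMul_exp_ad hb, hX2, hexp', hs]
  · rw [vecMul_exp_ad_apply_two hb, hXz, hX2]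
    have hv : expSubOneDiv (s' * (lam - I)) * -((lam - I) *
        -(v / (expSubOneDiv (s' * (lam - I)) * (lam - I)))) = v := by
      field_simp
    have hfv : complexPart f * conj v = ((y 2 - f 2 : ℝ) : ℂ) := by
      simp only [v, map_div₀, conj_conj, conj_ofReal]
      field_simp
    rw [hv, hfv, ofReal_re]
    ring

end LieAlgebra

end

open Complex in
theorem stmt_10_general (lam : ℝ)
    (L : Type) [LieRing L] [LieAlgebra ℝ L] (b : Module.Basis (Fin 3) ℝ L)
    (h31 : ⁅b 2, b 0⁆ = lam • b 0 - b 1) (h32 : ⁅b 2, b 1⁆ = b 0 + lam • b 1)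
    (h12 : ⁅b 0, b 1⁆ = 0)
    (f : Fin 3 → ℝ) (Ω : Set (Fin 3 → ℝ))
    (hΩ : Ω = { y | ∃ X : L,
      y = Matrix.vecMul f (NormedSpace.exp ((LinearMap.toMatrix b b) (LieAlgebra.ad ℝ L X))) }) :
    (f 0 = 0 ∧ f 1 = 0 → Ω = {f}) ∧
    (¬ (f 0 = 0 ∧ f 1 = 0) →
      Ω = { y | ∃ s t : ℝ,
        y = ![Real.exp (lam * s) * (f 0 * Real.cos s - f 1 * Real.sin s),
              Real.exp (lam * s) * (f 0 * Real.sin s + f 1 * Real.cos s), t] } ∧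
      Ω = { y | ∃ s t : ℝ,
        ((y 0 : ℂ) + y 1 * I = ((f 0 : ℂ) + f 1 * I) * Complex.exp ((lam + I) * s)) ∧
        y 2 = t }) := by
  have hb : IsG33Basis lam b := ⟨h31, h32, h12⟩
  subst hΩ
  refine ⟨fun hf => ?_, fun hf => ⟨?_, ?_⟩⟩
  · ext y
    exact mem_coadjointOrbit_iff_of_eq_zero hb (complexPart_eq_zero_iff.2 hf) y
  all_goals
    ext y
    rw [Set.mem_ofPred_eq, mem_coadjointOrbit_iff_of_ne_zero hb (mt complexPart_eq_zero_iff.1 hf)]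
  · simp only [Set.mem_ofPred_eq, ext_complexPart (z := ![_, _, _]), ← complexPart_mul_exp]
    simp
  · simp [complexPart]

open Complex in
/-- coadjoint orbit picture for `G_{3,3(λ)}` (`λ ≥ 0`;
`[X3,X1]=λX1−X2`, `[X3,X2]=X1+λX2`). `Ω_F(G) = {F ∘ exp(ad_X) : X ∈ G}` in the
coordinates of the dual basis; the second description is the equivalent complex form
under the identification `ℝ³ ≅ ℂ × ℝ`, `(x1,x2,x3) ↦ (x1+ix2, x3)`. -/
theorem stmt_10 (lam : ℝ) (hlam : 0 ≤ lam)
    (L : Type) [LieRing L] [LieAlgebra ℝ L] (b : Module.Basis (Fin 3) ℝ L)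
    (h31 : ⁅b 2, b 0⁆ = lam • b 0 - b 1) (h32 : ⁅b 2, b 1⁆ = b 0 + lam • b 1)
    (h12 : ⁅b 0, b 1⁆ = 0)
    (f : Fin 3 → ℝ) (Ω : Set (Fin 3 → ℝ))
    (hΩ : Ω = { y | ∃ X : L,
      y = Matrix.vecMul f (NormedSpace.exp ((LinearMap.toMatrix b b) (LieAlgebra.ad ℝ L X))) }) :
    (f 0 = 0 ∧ f 1 = 0 → Ω = {f}) ∧
    (¬ (f 0 = 0 ∧ f 1 = 0) →
      Ω = { y | ∃ s t : ℝ,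
        y = ![Real.exp (lam * s) * (f 0 * Real.cos s - f 1 * Real.sin s),
              Real.exp (lam * s) * (f 0 * Real.sin s + f 1 * Real.cos s), t] } ∧
      Ω = { y | ∃ s t : ℝ,
        ((y 0 : ℂ) + y 1 * I = ((f 0 : ℂ) + f 1 * I) * Complex.exp ((lam + I) * s)) ∧
        y 2 = t }) :=
  stmt_10_general lam L b h31 h32 h12 f Ω hΩ
end

section
/- Let G = G_{4,1} and let F = (f1,f2,f3,f4) ∈ G* ≅ ℝ⁴. If f1 = f2 = 0 then Ω_F(G) = {F}. If (f1,f2) ≠ (0,0) then Ω_F(G) = { (f1·e^s, f2, t, f2·s + f4) : s,t ∈ ℝ }. In particular: if f1 ≠ 0 = f2 then Ω_F(G) = { x ∈ ℝ⁴ : x2 = 0, x4 = f4, f1·x1 > 0 }, and if f2 ≠ 0 then Ω_F(G) = { x ∈ ℝ⁴ : x2 = f2, x1·e^{−x4/x2} = f1·e^{−f4/f2} }. -/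
/-!
With `x = b.repr X`, the matrix of `ad X` in the basis `b` is `S + N` with `S` supported on the
first row, `S * S = x₂ • S` and `N * N = S * N = N * S = 0`, so
`exp (ad X) = 1 + N + ((e^{x₂} - 1) / x₂) • S`. Hence the orbit of `f` consists of the vectors
`(f₀ e^q, f₁, f₂ - f₀ p (e^q - 1) / q - f₁ r, f₁ q + f₃)`. Since `(e^q - 1) / q` never vanishes,
the third coordinate is free as soon as `(f₀, f₁) ≠ 0`; the last two descriptions come from
eliminating `q`.
-/

open scoped Nat Matrix

-- `(exp c - 1) / c`, without the removable singularity at `c = 0`.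
noncomputable def expQuot (c : ℝ) : ℝ := ∑' n : ℕ, c ^ n / ((n + 1)! : ℝ)

lemma summable_expQuot (c : ℝ) : Summable fun n : ℕ => c ^ n / ((n + 1)! : ℝ) := by
  refine .of_norm <| (Real.summable_pow_div_factorial |c|).of_nonneg_of_le (fun _ => norm_nonneg _)
    fun n => ?_
  rw [norm_div, norm_pow, Real.norm_eq_abs, Real.norm_natCast]
  gcongr
  exact n.le_succ

lemma mul_expQuot (c : ℝ) : c * expQuot c = Real.exp c - 1 := by
  have h := (hasSum_nat_add_iff' 1).mpr (NormedSpace.expSeries_div_hasSum_exp c)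
  rw [← Real.exp_eq_exp_ℝ] at h
  simp only [Finset.sum_range_one, pow_zero, Nat.factorial_zero, Nat.cast_one, div_one] at h
  rw [expQuot, ← tsum_mul_left, ← h.tsum_eq]
  exact tsum_congr fun n => by rw [pow_succ', mul_div_assoc]

lemma expQuot_zero : expQuot 0 = 1 := by
  rw [expQuot, tsum_eq_single 0 fun n hn => by simp [zero_pow hn]]
  simp

lemma expQuot_ne_zero (c : ℝ) : expQuot c ≠ 0 := by
  intro h
  have hc : Real.exp c = 1 := by linarith [mul_expQuot c, mul_eq_zero_of_right c h]
  rw [Real.exp_eq_one_iff] at hc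
  simp [hc, expQuot_zero] at h

theorem exp_eq_one_add_expQuot_smul {A : Type*} [Ring A] [Algebra ℝ A] [TopologicalSpace A]
    [IsTopologicalRing A] [T2Space A] [ContinuousSMul ℝ A] {a : A} {c : ℝ} (h : a * a = c • a) :
    NormedSpace.exp a = 1 + expQuot c • a := by
  have hpow : ∀ n : ℕ, a ^ (n + 1) = c ^ n • a := by
    intro n
    induction n with
    | zero => simp
    | succ k ih => rw [pow_succ, ih, smul_mul_assoc, h, smul_smul, pow_succ]
  have htail : HasSum (fun n : ℕ => ((n + 1)! : ℝ)⁻¹ • a ^ (n + 1)) (expQuot c • a) := by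
    simp_rw [hpow, smul_smul, ← div_eq_inv_mul]
    exact (summable_expQuot c).hasSum.smul_const a
  have hexp : HasSum (fun n : ℕ => (n ! : ℝ)⁻¹ • a ^ n) (1 + expQuot c • a) :=
    (hasSum_nat_add_iff' 1).mp (by simpa using htail)
  rw [NormedSpace.exp_eq_tsum ℝ]
  exact hexp.tsum_eq

theorem Matrix.exp_add_eq_of_mul_eq {m : Type*} [Fintype m] [DecidableEq m]
    {S N : Matrix m m ℝ} {c : ℝ} (hS : S * S = c • S) (hN : N * N = 0) (hSN : S * N = 0)
    (hNS : N * S = 0) :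
    NormedSpace.exp (S + N) = 1 + N + expQuot c • S := by
  have hN' : N * N = (0 : ℝ) • N := by rw [hN, zero_smul]
  rw [Matrix.exp_add_of_commute S N (hSN.trans hNS.symm), exp_eq_one_add_expQuot_smul hS,
    exp_eq_one_add_expQuot_smul hN', expQuot_zero, one_smul]
  simp only [mul_add, add_mul, mul_one, one_mul, smul_mul_assoc, hSN, smul_zero, add_zero]
  abel

lemma exp_adMatrix_G41 (c0 c2 c3 : ℝ) :
    NormedSpace.exp !![c2, 0, -c0, 0; 0, 0, -c3, c2; 0, 0, 0, 0; 0, 0, 0, 0] =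
      !![Real.exp c2, 0, -(c0 * expQuot c2), 0; 0, 1, -c3, c2; 0, 0, 1, 0; 0, 0, 0, 1] := by
  set S : Matrix (Fin 4) (Fin 4) ℝ := !![c2, 0, -c0, 0; 0, 0, 0, 0; 0, 0, 0, 0; 0, 0, 0, 0]
  set N : Matrix (Fin 4) (Fin 4) ℝ := !![0, 0, 0, 0; 0, 0, -c3, c2; 0, 0, 0, 0; 0, 0, 0, 0]
  have hsplit : !![c2, 0, -c0, 0; 0, 0, -c3, c2; 0, 0, 0, 0; 0, 0, 0, 0] = S + N := by
    ext i j; fin_cases i <;> fin_cases j <;> simp [S, N]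
  obtain ⟨hS, hN, hSN, hNS⟩ : S * S = c2 • S ∧ N * N = 0 ∧ S * N = 0 ∧ N * S = 0 := by
    refine ⟨?_, ?_, ?_, ?_⟩ <;> ext i j <;> fin_cases i <;> fin_cases j <;>
      simp [S, N, Matrix.mul_apply, Fin.sum_univ_four]
  rw [hsplit, Matrix.exp_add_eq_of_mul_eq hS hN hSN hNS]
  ext i j
  fin_cases i <;> fin_cases j <;> simp [S, N] <;> linarith [mul_expQuot c2]

section G41

variable {L : Type*} [LieRing L] [LieAlgebra ℝ L] {b : Module.Basis (Fin 4) ℝ L}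

lemma toMatrix_ad_G41 (h31 : ⁅b 2, b 0⁆ = b 0) (h34 : ⁅b 2, b 3⁆ = b 1) (h32 : ⁅b 2, b 1⁆ = 0)
    (h12 : ⁅b 0, b 1⁆ = 0) (h14 : ⁅b 0, b 3⁆ = 0) (h24 : ⁅b 1, b 3⁆ = 0) (X : L) :
    LinearMap.toMatrix b b (LieAlgebra.ad ℝ L X) =
      !![b.repr X 2, 0, -b.repr X 0, 0; 0, 0, -b.repr X 3, b.repr X 2; 0, 0, 0, 0; 0, 0, 0, 0] := by
  have h13 : ⁅b 0, b 2⁆ = -b 0 := by rw [← lie_skew, h31]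
  have h23 : ⁅b 1, b 2⁆ = 0 := by rw [← lie_skew, h32, neg_zero]
  have h43 : ⁅b 3, b 2⁆ = -b 1 := by rw [← lie_skew, h34]
  have h21 : ⁅b 1, b 0⁆ = 0 := by rw [← lie_skew, h12, neg_zero]
  have h41 : ⁅b 3, b 0⁆ = 0 := by rw [← lie_skew, h14, neg_zero]
  have h42 : ⁅b 3, b 1⁆ = 0 := by rw [← lie_skew, h24, neg_zero]
  ext i j
  rw [LinearMap.toMatrix_apply, LieAlgebra.ad_apply]
  nth_rw 1 [← b.sum_repr X]
  rw [Fin.sum_univ_four]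
  fin_cases j <;> fin_cases i <;>
    simp [add_lie, smul_lie, h31, h34, h32, h12, h14, h24, h13, h23, h43, h21, h41, h42]

lemma vecMul_exp_ad_G41 (h31 : ⁅b 2, b 0⁆ = b 0) (h34 : ⁅b 2, b 3⁆ = b 1) (h32 : ⁅b 2, b 1⁆ = 0)
    (h12 : ⁅b 0, b 1⁆ = 0) (h14 : ⁅b 0, b 3⁆ = 0) (h24 : ⁅b 1, b 3⁆ = 0) (f : Fin 4 → ℝ) (X : L) :
    f ᵥ* NormedSpace.exp (LinearMap.toMatrix b b (LieAlgebra.ad ℝ L X)) =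
      ![f 0 * Real.exp (b.repr X 2), f 1,
        f 2 - f 0 * (b.repr X 0 * expQuot (b.repr X 2)) - f 1 * b.repr X 3,
        f 1 * b.repr X 2 + f 3] := by
  rw [toMatrix_ad_G41 h31 h34 h32 h12 h14 h24, exp_adMatrix_G41]
  ext j
  fin_cases j <;> simp [Matrix.vecMul, dotProduct, Fin.sum_univ_four]
  ring

lemma coadjointOrbit_G41 (h31 : ⁅b 2, b 0⁆ = b 0) (h34 : ⁅b 2, b 3⁆ = b 1)
    (h32 : ⁅b 2, b 1⁆ = 0) (h12 : ⁅b 0, b 1⁆ = 0) (h14 : ⁅b 0, b 3⁆ = 0) (h24 : ⁅b 1, b 3⁆ = 0)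
    (f : Fin 4 → ℝ) :
    { y | ∃ X : L, y = f ᵥ* NormedSpace.exp (LinearMap.toMatrix b b (LieAlgebra.ad ℝ L X)) } =
      { y | ∃ p q r : ℝ,
        y = ![f 0 * Real.exp q, f 1, f 2 - f 0 * (p * expQuot q) - f 1 * r, f 1 * q + f 3] } := by
  ext y
  simp only [Set.mem_ofPred_eq, vecMul_exp_ad_G41 h31 h34 h32 h12 h14 h24]
  constructor
  · rintro ⟨X, rfl⟩
    exact ⟨_, _, _, rfl⟩
  · rintro ⟨p, q, r, rfl⟩
    refine ⟨b.repr.symm (Finsupp.equivFunOnFinite.symm ![p, 0, q, r]), ?_⟩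
    simp

end G41

section OrbitSets

lemma eq_vec4_iff {α : Type*} {x : Fin 4 → α} {a b c d : α} :
    x = ![a, b, c, d] ↔ x 0 = a ∧ x 1 = b ∧ x 2 = c ∧ x 3 = d := by
  constructor
  · rintro rfl
    simp
  · rintro ⟨h0, h1, h2, h3⟩
    ext i
    fin_cases i <;> simp [h0, h1, h2, h3]

variable {f : Fin 4 → ℝ}

lemma orbitG41_params_eq_singleton (h0 : f 0 = 0) (h1 : f 1 = 0) :
    { y | ∃ p q r : ℝ,
      y = ![f 0 * Real.exp q, f 1, f 2 - f 0 * (p * expQuot q) - f 1 * r, f 1 * q + f 3] } =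
      {f} := by
  ext y
  constructor
  · rintro ⟨p, q, r, rfl⟩
    ext i
    fin_cases i <;> simp [h0, h1]
  · rintro rfl
    exact ⟨0, 0, 0, by ext i; fin_cases i <;> simp [h0, h1]⟩

lemma orbitG41_params_eq_of_ne_zero (hf : ¬(f 0 = 0 ∧ f 1 = 0)) :
    { y | ∃ p q r : ℝ,
      y = ![f 0 * Real.exp q, f 1, f 2 - f 0 * (p * expQuot q) - f 1 * r, f 1 * q + f 3] } =
      { y | ∃ s t : ℝ, y = ![f 0 * Real.exp s, f 1, t, f 1 * s + f 3] } := by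
  ext y
  simp only [Set.mem_ofPred_eq]
  constructor
  · rintro ⟨p, q, r, rfl⟩
    exact ⟨q, _, rfl⟩
  · rintro ⟨s, t, rfl⟩
    obtain ⟨p, r, hpr⟩ : ∃ p r : ℝ, f 2 - f 0 * (p * expQuot s) - f 1 * r = t := by
      by_cases h1 : f 1 = 0
      · have h0 : f 0 ≠ 0 := fun h0 => hf ⟨h0, h1⟩
        have hg := expQuot_ne_zero s
        exact ⟨(f 2 - t) / (f 0 * expQuot s), 0, by field_simp; ring⟩
      · exact ⟨0, (f 2 - t) / f 1, by field_simp; ring⟩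
    exact ⟨p, s, r, by rw [hpr]⟩

lemma orbitG41_eq_of_snd_eq_zero (h0 : f 0 ≠ 0) (h1 : f 1 = 0) :
    { y | ∃ s t : ℝ, y = ![f 0 * Real.exp s, f 1, t, f 1 * s + f 3] } =
      { x | x 1 = 0 ∧ x 3 = f 3 ∧ f 0 * x 0 > 0 } := by
  ext x
  simp only [Set.mem_ofPred_eq, eq_vec4_iff, h1, zero_mul, zero_add]
  constructor
  · rintro ⟨s, t, hx0, hx1, -, hx3⟩
    refine ⟨hx1, hx3, ?_⟩
    rw [hx0, ← mul_assoc]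
    exact mul_pos (mul_self_pos.2 h0) (Real.exp_pos s)
  · rintro ⟨hx1, hx3, hpos⟩
    have hq : 0 < x 0 / f 0 := by
      simpa [mul_div_mul_left _ _ h0] using div_pos hpos (mul_self_pos.2 h0)
    refine ⟨Real.log (x 0 / f 0), x 2, ?_, hx1, rfl, hx3⟩
    rw [Real.exp_log hq]
    field_simp

lemma orbitG41_eq_of_snd_ne_zero (h1 : f 1 ≠ 0) :
    { y | ∃ s t : ℝ, y = ![f 0 * Real.exp s, f 1, t, f 1 * s + f 3] } =
      { x | x 1 = f 1 ∧ x 0 * Real.exp (-(x 3) / x 1) = f 0 * Real.exp (-(f 3) / f 1) } := by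
  ext x
  simp only [Set.mem_ofPred_eq, eq_vec4_iff]
  constructor
  · rintro ⟨s, t, hx0, hx1, -, hx3⟩
    refine ⟨hx1, ?_⟩
    rw [hx0, hx1, hx3, mul_assoc, ← Real.exp_add]
    congr 2
    field_simp
    ring
  · rintro ⟨hx1, hx⟩
    rw [hx1] at hx
    refine ⟨(x 3 - f 3) / f 1, x 2, ?_, hx1, rfl, by field_simp; ring⟩
    calc x 0 = x 0 * Real.exp (-(x 3) / f 1) * Real.exp (x 3 / f 1) := by
          rw [mul_assoc, ← Real.exp_add, neg_div, neg_add_cancel, Real.exp_zero, mul_one]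
      _ = f 0 * Real.exp (-(f 3) / f 1) * Real.exp (x 3 / f 1) := by rw [hx]
      _ = f 0 * Real.exp ((x 3 - f 3) / f 1) := by
          rw [mul_assoc, ← Real.exp_add]
          congr 2
          ring

end OrbitSets

/-- coadjoint orbit picture for `G_{4,1}` (`[X3,X1]=X1`, `[X3,X4]=X2`).
`Ω_F(G) = {F ∘ exp(ad_X) : X ∈ G}` in the coordinates of the dual basis. -/
theorem stmt_11 (L : Type) [LieRing L] [LieAlgebra ℝ L] (b : Module.Basis (Fin 4) ℝ L)
    (h31 : ⁅b 2, b 0⁆ = b 0) (h34 : ⁅b 2, b 3⁆ = b 1) (h32 : ⁅b 2, b 1⁆ = 0)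
    (h12 : ⁅b 0, b 1⁆ = 0) (h14 : ⁅b 0, b 3⁆ = 0) (h24 : ⁅b 1, b 3⁆ = 0)
    (f : Fin 4 → ℝ) (Ω : Set (Fin 4 → ℝ))
    (hΩ : Ω = { y | ∃ X : L,
      y = Matrix.vecMul f (NormedSpace.exp ((LinearMap.toMatrix b b) (LieAlgebra.ad ℝ L X))) }) :
    (f 0 = 0 ∧ f 1 = 0 → Ω = {f}) ∧
    (¬ (f 0 = 0 ∧ f 1 = 0) →
      Ω = { y | ∃ s t : ℝ, y = ![f 0 * Real.exp s, f 1, t, f 1 * s + f 3] }) ∧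
    (f 0 ≠ 0 ∧ f 1 = 0 →
      Ω = { x | x 1 = 0 ∧ x 3 = f 3 ∧ f 0 * x 0 > 0 }) ∧
    (f 1 ≠ 0 →
      Ω = { x | x 1 = f 1 ∧ x 0 * Real.exp (-(x 3) / x 1) = f 0 * Real.exp (-(f 3) / f 1) }) := by
  rw [hΩ, coadjointOrbit_G41 h31 h34 h32 h12 h14 h24]
  refine ⟨fun ⟨h0, h1⟩ => orbitG41_params_eq_singleton h0 h1, orbitG41_params_eq_of_ne_zero,
    fun ⟨h0, h1⟩ => ?_, fun h1 => ?_⟩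
  · rw [orbitG41_params_eq_of_ne_zero fun h => h0 h.1, orbitG41_eq_of_snd_eq_zero h0 h1]
  · rw [orbitG41_params_eq_of_ne_zero fun h => h1 h.2, orbitG41_eq_of_snd_ne_zero h1]
end

section
/- Let G = G_{4,2} and let F = (f1,f2,f3,f4) ∈ G* ≅ ℝ⁴. If f1 = f2 = 0 then Ω_F(G) = {F}. If f1 = 0 ≠ f2 then Ω_F(G) = { x ∈ ℝ⁴ : x1 = 0, x2 = f2 } (a 2-dimensional plane with x3, x4 free). If f1 ≠ 0 then Ω_F(G) = { x ∈ ℝ⁴ : x1 = f1, x2² − 2·x1·x4 = f2² − 2·f1·f4 } (a parabolic cylinder with x3 free). -/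
/-!
In this sketch indices are the paper's, `Xᵢ = b (i - 1)`. For `X = ∑ aᵢ Xᵢ` the matrix of `ad X` is
strictly upper triangular with `(ad X)³ = 0`, so `F ∘ exp(ad X) = F (1 + ad X + (ad X)²/2)` is an
explicit polynomial map of `a`, whose first coordinate is always `f₁`. When `f₁ ≠ 0`, the
parameters `a₃, a₂` prescribe the second and third coordinates, and the fourth is then forced by
the invariant `x₂² − 2 x₁ x₄`. When `f₁ = 0 ≠ f₂`, the parameters `a₄, a₃` move the last two
coordinates freely, and when `f₁ = f₂ = 0` the map is constant.
-/

open Matrix NormedSpace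

namespace NormedSpace

open scoped Nat

theorem exp_eq_sum_range_of_pow_eq_zero (𝕂 : Type*) {𝔸 : Type*} [Field 𝕂] [CharZero 𝕂] [Ring 𝔸]
    [Algebra 𝕂 𝔸] [TopologicalSpace 𝔸] [IsTopologicalRing 𝔸] {x : 𝔸} {n : ℕ} (hx : x ^ n = 0) :
    exp x = ∑ k ∈ Finset.range n, (k !⁻¹ : 𝕂) • x ^ k := by
  rw [exp_eq_tsum 𝕂]
  refine tsum_eq_sum fun k hk => ?_
  rw [pow_eq_zero_of_le (by simpa using hk) hx, smul_zero]

end NormedSpace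

namespace G42

/-- The matrix of `ad X` in the basis `b`, where `a = b.equivFun X`. -/
noncomputable def adMatrix (a : Fin 4 → ℝ) : Matrix (Fin 4) (Fin 4) ℝ :=
  !![0, a 2, -a 1, 0;
     0, 0, -a 3, a 2;
     0, 0, 0, 0;
     0, 0, 0, 0]

theorem adMatrix_sq (a : Fin 4 → ℝ) :
    adMatrix a ^ 2 = !![0, 0, -(a 2 * a 3), a 2 ^ 2; 0, 0, 0, 0; 0, 0, 0, 0; 0, 0, 0, 0] := by
  ext i j
  fin_cases i <;> fin_cases j <;> simp [adMatrix, sq, Matrix.mul_apply, Fin.sum_univ_four]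

theorem adMatrix_pow_three (a : Fin 4 → ℝ) : adMatrix a ^ 3 = 0 := by
  rw [pow_succ, adMatrix_sq]
  ext i j
  fin_cases i <;> fin_cases j <;> simp [adMatrix, Matrix.mul_apply, Fin.sum_univ_four]

noncomputable def coadAction (f a : Fin 4 → ℝ) : Fin 4 → ℝ :=
  ![f 0, f 1 + a 2 * f 0,
    f 2 - a 1 * f 0 - a 3 * f 1 - a 2 * a 3 * f 0 / 2,
    f 3 + a 2 * f 1 + a 2 ^ 2 * f 0 / 2]

theorem vecMul_exp_adMatrix (f a : Fin 4 → ℝ) :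
    vecMul f (exp (adMatrix a)) = coadAction f a := by
  rw [exp_eq_sum_range_of_pow_eq_zero ℝ (adMatrix_pow_three a)]
  simp only [Finset.sum_range_succ, Finset.sum_range_zero, adMatrix_sq]
  funext j
  fin_cases j <;>
    simp [vecMul, dotProduct, Fin.sum_univ_four, adMatrix, coadAction, Matrix.one_apply] <;> ring

theorem toMatrix_ad {L : Type*} [LieRing L] [LieAlgebra ℝ L] {b : Module.Basis (Fin 4) ℝ L}
    (h32 : ⁅b 2, b 1⁆ = b 0) (h34 : ⁅b 2, b 3⁆ = b 1) (h31 : ⁅b 2, b 0⁆ = 0)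
    (h12 : ⁅b 0, b 1⁆ = 0) (h14 : ⁅b 0, b 3⁆ = 0) (h24 : ⁅b 1, b 3⁆ = 0) (X : L) :
    LinearMap.toMatrix b b (LieAlgebra.ad ℝ L X) = adMatrix (b.equivFun X) := by
  have h21 : ⁅b 1, b 0⁆ = 0 := by rw [← lie_skew, h12, neg_zero]
  have h41 : ⁅b 3, b 0⁆ = 0 := by rw [← lie_skew, h14, neg_zero]
  have h42 : ⁅b 3, b 1⁆ = 0 := by rw [← lie_skew, h24, neg_zero]
  have h13 : ⁅b 0, b 2⁆ = 0 := by rw [← lie_skew, h31, neg_zero]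
  have h23 : ⁅b 1, b 2⁆ = -b 0 := by rw [← lie_skew, h32]
  have h43 : ⁅b 3, b 2⁆ = -b 1 := by rw [← lie_skew, h34]
  obtain ⟨a, rfl⟩ := b.equivFun.symm.surjective X
  ext i j
  rw [LinearMap.toMatrix_apply, LieAlgebra.ad_apply, b.equivFun.apply_symm_apply,
    Module.Basis.equivFun_symm_apply]
  fin_cases j <;>
    simp [Fin.sum_univ_four, h32, h34, h31, h12, h14, h24, h21, h41, h42, h13, h23,
      h43] <;>
    fin_cases i <;> simp [adMatrix]

theorem coadjointOrbit_eq_range {L : Type*} [LieRing L] [LieAlgebra ℝ L]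
    {b : Module.Basis (Fin 4) ℝ L}
    (h32 : ⁅b 2, b 1⁆ = b 0) (h34 : ⁅b 2, b 3⁆ = b 1) (h31 : ⁅b 2, b 0⁆ = 0)
    (h12 : ⁅b 0, b 1⁆ = 0) (h14 : ⁅b 0, b 3⁆ = 0) (h24 : ⁅b 1, b 3⁆ = 0) (f : Fin 4 → ℝ) :
    { y | ∃ X : L, y = vecMul f (exp (LinearMap.toMatrix b b (LieAlgebra.ad ℝ L X))) } =
      Set.range (coadAction f) := by
  ext y
  simp only [toMatrix_ad h32 h34 h31 h12 h14 h24, vecMul_exp_adMatrix,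
    Set.mem_ofPred_eq, Set.mem_range, eq_comm (a := y), b.equivFun.surjective.exists]

theorem range_coadAction_of_eq_zero {f : Fin 4 → ℝ} (h0 : f 0 = 0) (h1 : f 1 = 0) :
    Set.range (coadAction f) = {f} := by
  have : coadAction f = fun _ => f := by
    funext a j
    fin_cases j <;> simp [coadAction, h0, h1]
  rw [this, Set.range_const]

theorem range_coadAction_of_eq_zero_of_ne_zero {f : Fin 4 → ℝ} (h0 : f 0 = 0) (h1 : f 1 ≠ 0) :
    Set.range (coadAction f) = { x | x 0 = 0 ∧ x 1 = f 1 } := by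
  refine Set.Subset.antisymm (Set.range_subset_iff.2 fun a => by simp [coadAction, h0]) ?_
  rintro x ⟨hx0, hx1⟩
  refine ⟨![0, 0, (x 3 - f 3) / f 1, (f 2 - x 2) / f 1], ?_⟩
  funext j
  fin_cases j <;> simp [coadAction, h0, hx0, hx1] <;> field_simp <;> ring

theorem range_coadAction_of_ne_zero {f : Fin 4 → ℝ} (h0 : f 0 ≠ 0) :
    Set.range (coadAction f) =
      { x | x 0 = f 0 ∧ x 1 ^ 2 - 2 * x 0 * x 3 = f 1 ^ 2 - 2 * f 0 * f 3 } := by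
  refine Set.Subset.antisymm (Set.range_subset_iff.2 fun a => ⟨rfl, ?_⟩) ?_
  · simp only [coadAction, Fin.isValue, cons_val_one, cons_val_zero, cons_val]
    ring
  rintro x ⟨hx0, hx⟩
  rw [hx0] at hx
  refine ⟨![0, (f 2 - x 2) / f 0, (x 1 - f 1) / f 0, 0], ?_⟩
  funext j
  fin_cases j <;> simp [coadAction, hx0] <;> field_simp
  · ring
  · ring
  · linear_combination hx

end G42

open G42 in
/-- coadjoint orbit picture for `G_{4,2}` (`[X3,X2]=X1`, `[X3,X4]=X2`).
`Ω_F(G) = {F ∘ exp(ad_X) : X ∈ G}` in the coordinates of the dual basis. -/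
theorem stmt_12 (L : Type) [LieRing L] [LieAlgebra ℝ L] (b : Module.Basis (Fin 4) ℝ L)
    (h32 : ⁅b 2, b 1⁆ = b 0) (h34 : ⁅b 2, b 3⁆ = b 1) (h31 : ⁅b 2, b 0⁆ = 0)
    (h12 : ⁅b 0, b 1⁆ = 0) (h14 : ⁅b 0, b 3⁆ = 0) (h24 : ⁅b 1, b 3⁆ = 0)
    (f : Fin 4 → ℝ) (Ω : Set (Fin 4 → ℝ))
    (hΩ : Ω = { y | ∃ X : L,
      y = Matrix.vecMul f (NormedSpace.exp ((LinearMap.toMatrix b b) (LieAlgebra.ad ℝ L X))) }) :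
    (f 0 = 0 ∧ f 1 = 0 → Ω = {f}) ∧
    (f 0 = 0 ∧ f 1 ≠ 0 → Ω = { x | x 0 = 0 ∧ x 1 = f 1 }) ∧
    (f 0 ≠ 0 →
      Ω = { x | x 0 = f 0 ∧ (x 1)^2 - 2 * x 0 * x 3 = (f 1)^2 - 2 * f 0 * f 3 }) := by
  rw [hΩ, coadjointOrbit_eq_range h32 h34 h31 h12 h14 h24]
  exact ⟨fun h => range_coadAction_of_eq_zero h.1 h.2,
    fun h => range_coadAction_of_eq_zero_of_ne_zero h.1 h.2, range_coadAction_of_ne_zero⟩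
end

section
/- Let k ≥ 0, n = 5+2k, G = G_{5+2k}, and let F = (f1,…,f_n) ∈ G* ≅ ℝⁿ. If f1 = f2 = 0 then Ω_F(G) = {F}. If f2 = 0 ≠ f1 then Ω_F(G) = { x ∈ ℝⁿ : x1 = f1, x2 = 0, x_j = f_j for all j = 5,…,5+2k } (a 2-dimensional plane with x3, x4 free). If f2 ≠ 0 then Ω_F(G) = { x ∈ ℝⁿ : x2 = f2 } (a (4+2k)-dimensional hyperplane). -/
/-!
For every `X`, `ad X` maps `G` into `span {X1, X2}`, sends `X1` to a multiple of `X2` and kills the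
centre `ℝ X2`; hence `(ad X)³ = 0` and `F ∘ exp (ad X) = F + F ∘ ad X + ½ F ∘ (ad X)²`. In the
coordinates `c` of `X` this is an explicit polynomial map of `c`, whose `X2`-coordinate is `f2`.
If `f2 = 0`, only the `X3`, `X4` coordinates move, by `f1` times `(-c4, c3)`. If `f2 ≠ 0`, the
`X1`-coordinate fixes `c3`, the `X5`-coordinate fixes `c4`, the `X3`, `X4` coordinates then fix
`c1`, `c5`, and each remaining coordinate `Xj` moves by `± f2` times the coordinate of `c` at the
partner of `j` in the pairs `(6, 7), (8, 9), …`.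
-/

open Module Matrix Finset

theorem NormedSpace.exp_eq_sum_range_of_pow_eq_zero_s14 (𝕂 : Type*) {𝔸 : Type*} [Field 𝕂]
    [CharZero 𝕂] [Ring 𝔸] [Algebra 𝕂 𝔸] [TopologicalSpace 𝔸] [IsTopologicalRing 𝔸] {a : 𝔸}
    {m : ℕ} (h : a ^ m = 0) :
    NormedSpace.exp a = ∑ i ∈ range m, (i.factorial⁻¹ : 𝕂) • a ^ i := by
  rw [NormedSpace.exp_eq_tsum 𝕂]
  refine tsum_eq_sum fun i hi => ?_
  rw [pow_eq_zero_of_le (by simpa using hi) h, smul_zero]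

theorem Matrix.vecMul_toMatrix_apply {R ι M : Type*} [CommSemiring R] [Fintype ι] [DecidableEq ι]
    [AddCommMonoid M] [Module R M] (b : Basis ι R M) (T : M →ₗ[R] M) (f : ι → R) (j : ι) :
    vecMul f (LinearMap.toMatrix b b T) j = b.constr R f (T (b j)) := by
  simp [vecMul, dotProduct, LinearMap.toMatrix_apply, Basis.constr_apply_fintype, mul_comm]

theorem Matrix.vecMul_exp_toMatrix_apply {𝕂 ι M : Type*} [Field 𝕂] [CharZero 𝕂]
    [TopologicalSpace 𝕂] [IsTopologicalRing 𝕂] [Fintype ι] [DecidableEq ι] [AddCommGroup M]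
    [Module 𝕂 M] (b : Basis ι 𝕂 M) {T : M →ₗ[𝕂] M} {m : ℕ} (hT : T ^ m = 0) (f : ι → 𝕂)
    (j : ι) :
    vecMul f (NormedSpace.exp (LinearMap.toMatrix b b T)) j =
      b.constr 𝕂 f (∑ i ∈ range m, (i.factorial⁻¹ : 𝕂) • (T ^ i) (b j)) := by
  have hA : LinearMap.toMatrix b b T ^ m = 0 := by rw [LinearMap.toMatrix_pow, hT, map_zero]
  rw [NormedSpace.exp_eq_sum_range_of_pow_eq_zero_s14 𝕂 hA]
  simp only [LinearMap.toMatrix_pow, ← map_smul, ← map_sum, vecMul_toMatrix_apply,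
    LinearMap.sum_apply, LinearMap.smul_apply]

theorem Fin.sum_mul_eq_of_forall_val_ne {R : Type*} [NonUnitalNonAssocSemiring R] {n : ℕ}
    {c s : Fin n → R} (i₀ : Fin n) (hs : ∀ i : Fin n, i.val ≠ i₀.val → s i = 0) :
    ∑ i, c i * s i = c i₀ * s i₀ :=
  Fintype.sum_eq_single i₀ fun i hi => by rw [hs i (Fin.val_ne_iff.2 hi), mul_zero]

theorem Fin.val_three {n : ℕ} : ((3 : Fin (n + 4)) : ℕ) = 3 := rfl

theorem Fin.val_four {n : ℕ} : ((4 : Fin (n + 5)) : ℕ) = 4 := rfl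

theorem Fin.val_add_one_of_odd {n : ℕ} [NeZero n] (hn : n % 2 = 1) {j : Fin n}
    (hj : j.val % 2 = 1) : (j + 1).val = j.val + 1 :=
  Fin.val_add_one_of_lt' (by have := j.isLt; omega)

section LieAlgebraG

variable {k : ℕ}

/- The basis vector `b i` plays the role of the paper's `X_{i+1}`: `b 0 = X1`, `b 1 = X2`, and the
pairs `[X4, X5], [X6, X7], …` are `[b i, b (i + 1)]` for odd `i ≥ 3`. -/

def structConst₀ (i j : Fin (2*k+5)) : ℝ :=
  if i.val = 2 ∧ j.val = 3 then 1 else if i.val = 3 ∧ j.val = 2 then -1 else 0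

def structConst₁ (i j : Fin (2*k+5)) : ℝ :=
  if i.val = 2 ∧ j.val = 0 then 1 else
  if i.val = 0 ∧ j.val = 2 then -1 else
  if 3 ≤ i.val ∧ i.val % 2 = 1 ∧ j.val = i.val + 1 then 1 else
  if 3 ≤ j.val ∧ j.val % 2 = 1 ∧ i.val = j.val + 1 then -1 else 0

def adCoeff₀ (c : Fin (2*k+5) → ℝ) (j : Fin (2*k+5)) : ℝ :=
  if j.val = 2 then -c 3 else if j.val = 3 then c 2 else 0

def adCoeff₁ (c : Fin (2*k+5) → ℝ) (j : Fin (2*k+5)) : ℝ :=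
  if j.val = 0 then c 2 else if j.val = 1 then 0 else if j.val = 2 then -c 0 else
  if j.val % 2 = 0 then c (j - 1) else -c (j + 1)

theorem adCoeff₀_eq_zero {c : Fin (2*k+5) → ℝ} {j : Fin (2*k+5)} (h2 : j.val ≠ 2)
    (h3 : j.val ≠ 3) : adCoeff₀ c j = 0 := by
  rw [adCoeff₀, if_neg h2, if_neg h3]

theorem adCoeff₁_of_even {c : Fin (2*k+5) → ℝ} {j : Fin (2*k+5)} (hj : 3 ≤ j.val)
    (hpar : j.val % 2 = 0) : adCoeff₁ c j = c (j - 1) := by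
  rw [adCoeff₁, if_neg (by omega), if_neg (by omega), if_neg (by omega), if_pos hpar]

theorem adCoeff₁_of_odd {c : Fin (2*k+5) → ℝ} {j : Fin (2*k+5)} (hj : 3 ≤ j.val)
    (hpar : j.val % 2 = 1) : adCoeff₁ c j = -c (j + 1) := by
  rw [adCoeff₁, if_neg (by omega), if_neg (by omega), if_neg (by omega), if_neg (by omega)]

theorem sum_mul_structConst₀ (c : Fin (2*k+5) → ℝ) (j : Fin (2*k+5)) :
    ∑ i, c i * structConst₀ i j = adCoeff₀ c j := by
  obtain hj | hj | hj : j.val = 2 ∨ j.val = 3 ∨ (j.val ≠ 2 ∧ j.val ≠ 3) := by omega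
  · rw [Fin.sum_mul_eq_of_forall_val_ne 3 fun i hi => by
      simp only [structConst₀, Fin.val_three] at hi ⊢; split_ifs <;> first | rfl | omega]
    simp only [structConst₀, adCoeff₀, hj, Fin.val_three]
    norm_num
  · rw [Fin.sum_mul_eq_of_forall_val_ne 2 fun i hi => by
      simp only [structConst₀, Fin.val_two] at hi ⊢; split_ifs <;> first | rfl | omega]
    simp only [structConst₀, adCoeff₀, hj, Fin.val_two]
    norm_num
  · simp [structConst₀, adCoeff₀_eq_zero hj.1 hj.2, hj]

theorem sum_mul_structConst₁ (c : Fin (2*k+5) → ℝ) (j : Fin (2*k+5)) :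
    ∑ i, c i * structConst₁ i j = adCoeff₁ c j := by
  obtain hj | hj | hj | ⟨hj, hpar⟩ | ⟨hj, hpar⟩ : j.val = 0 ∨ j.val = 1 ∨ j.val = 2 ∨
      (3 ≤ j.val ∧ j.val % 2 = 0) ∨ (3 ≤ j.val ∧ j.val % 2 = 1) := by omega
  · rw [Fin.sum_mul_eq_of_forall_val_ne 2 fun i hi => by
      simp only [structConst₁, Fin.val_two] at hi ⊢; split_ifs <;> first | rfl | omega]
    simp only [structConst₁, adCoeff₁, hj, Fin.val_two]
    norm_num
  · rw [Fin.sum_mul_eq_of_forall_val_ne 2 fun i hi => by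
      simp only [structConst₁] at hi ⊢; split_ifs <;> first | rfl | omega]
    simp only [structConst₁, adCoeff₁, hj, Fin.val_two]
    norm_num
  · rw [Fin.sum_mul_eq_of_forall_val_ne 0 fun i hi => by
      simp only [structConst₁, Fin.val_zero] at hi ⊢; split_ifs <;> first | rfl | omega]
    simp only [structConst₁, adCoeff₁, hj, Fin.val_zero]
    norm_num
  · have h1 : (j - 1).val = j.val - 1 :=
      Fin.val_sub_one_of_ne_zero (Fin.ne_of_val_ne (by rw [Fin.val_zero]; omega))
    rw [Fin.sum_mul_eq_of_forall_val_ne (j - 1) fun i hi => by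
      simp only [structConst₁, h1] at hi ⊢; split_ifs <;> first | rfl | omega,
      adCoeff₁_of_even hj hpar]
    simp only [structConst₁, h1]
    split_ifs <;> first | omega | ring
  · have h1 := Fin.val_add_one_of_odd (by omega) hpar
    rw [Fin.sum_mul_eq_of_forall_val_ne (j + 1) fun i hi => by
      simp only [structConst₁, h1] at hi ⊢; split_ifs <;> first | rfl | omega,
      adCoeff₁_of_odd hj hpar]
    simp only [structConst₁, h1, and_true]
    split_ifs <;> first | omega | ring

variable {L : Type*} [LieRing L] [LieAlgebra ℝ L]

def IsGBasis (b : Basis (Fin (2*k+5)) ℝ L) : Prop :=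
  ∀ i j, ⁅b i, b j⁆ = structConst₀ i j • b 0 + structConst₁ i j • b 1

noncomputable def coadjointPoint (f c : Fin (2*k+5) → ℝ) : Fin (2*k+5) → ℝ :=
  fun j => f j + (f 0 + 2⁻¹ * f 1 * c 2) * adCoeff₀ c j + f 1 * adCoeff₁ c j

namespace IsGBasis

variable {b : Basis (Fin (2*k+5)) ℝ L}

theorem lie_basis (hb : IsGBasis b) (X : L) (j : Fin (2*k+5)) :
    ⁅X, b j⁆ = adCoeff₀ (b.repr X) j • b 0 + adCoeff₁ (b.repr X) j • b 1 := by
  conv_lhs => rw [← b.sum_repr X]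
  simp only [sum_lie, smul_lie, hb _ j, smul_add, smul_smul, sum_add_distrib, ← sum_smul,
    sum_mul_structConst₀, sum_mul_structConst₁]

theorem lie_basis_one (hb : IsGBasis b) (X : L) : ⁅X, b 1⁆ = 0 := by
  simp [hb.lie_basis, adCoeff₀, adCoeff₁]

theorem lie_lie_basis (hb : IsGBasis b) (X : L) (j : Fin (2*k+5)) :
    ⁅X, ⁅X, b j⁆⁆ = (adCoeff₀ (b.repr X) j * b.repr X 2) • b 1 := by
  rw [hb.lie_basis X j, lie_add, lie_smul, lie_smul, hb.lie_basis_one, hb.lie_basis X 0]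
  simp [adCoeff₀, adCoeff₁, smul_smul]

theorem ad_pow_three (hb : IsGBasis b) (X : L) : LieAlgebra.ad ℝ L X ^ 3 = 0 :=
  b.ext fun j => by simp [pow_succ, hb.lie_lie_basis, hb.lie_basis_one]

theorem vecMul_exp_ad (hb : IsGBasis b) (f : Fin (2*k+5) → ℝ) (X : L) :
    vecMul f (NormedSpace.exp (LinearMap.toMatrix b b (LieAlgebra.ad ℝ L X))) =
      coadjointPoint f (b.repr X) := by
  funext j
  rw [vecMul_exp_toMatrix_apply b (hb.ad_pow_three X)]
  simp only [sum_range_succ, sum_range_zero, pow_zero, pow_one, sq, Module.End.mul_apply,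
    LieAlgebra.ad_apply, Module.End.one_apply, hb.lie_lie_basis]
  rw [hb.lie_basis]
  simp only [map_add, map_smul, Basis.constr_basis, coadjointPoint, smul_eq_mul]
  norm_num
  ring

theorem setOf_vecMul_exp_ad (hb : IsGBasis b) (f : Fin (2*k+5) → ℝ) :
    { y | ∃ X : L, y = vecMul f (NormedSpace.exp (LinearMap.toMatrix b b (LieAlgebra.ad ℝ L X))) }
      = Set.range (coadjointPoint f) := by
  ext y
  simp only [Set.mem_ofPred_eq, Set.mem_range, hb.vecMul_exp_ad, eq_comm (a := y)]
  constructor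
  · rintro ⟨X, rfl⟩
    exact ⟨_, rfl⟩
  · rintro ⟨c, rfl⟩
    exact ⟨b.equivFun.symm c, congrArg _ (funext (congrFun (b.equivFun.apply_symm_apply c)))⟩

end IsGBasis

variable {f : Fin (2*k+5) → ℝ}

theorem coadjointPoint_one (c : Fin (2*k+5) → ℝ) : coadjointPoint f c 1 = f 1 := by
  simp [coadjointPoint, adCoeff₀, adCoeff₁]

theorem coadjointPoint_of_apply_one_eq_zero (h1 : f 1 = 0) (c : Fin (2*k+5) → ℝ) (j : Fin (2*k+5)) :
    coadjointPoint f c j = f j + f 0 * adCoeff₀ c j := by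
  simp [coadjointPoint, h1]

theorem range_coadjointPoint_eq_singleton (h0 : f 0 = 0) (h1 : f 1 = 0) :
    Set.range (coadjointPoint f) = {f} := by
  have hconst : coadjointPoint f = fun _ => f :=
    funext fun c => funext fun j => by simp [coadjointPoint_of_apply_one_eq_zero h1, h0]
  rw [hconst, Set.range_const]

theorem range_coadjointPoint_eq_plane (h1 : f 1 = 0) (h0 : f 0 ≠ 0) :
    Set.range (coadjointPoint f) =
      { x | x 0 = f 0 ∧ x 1 = 0 ∧ ∀ j : Fin (2*k+5), 4 ≤ j.val → x j = f j } := by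
  ext x
  constructor
  · rintro ⟨c, rfl⟩
    refine ⟨?_, h1 ▸ coadjointPoint_one c, fun j hj => ?_⟩
    · simp [coadjointPoint_of_apply_one_eq_zero h1, adCoeff₀]
    · rw [coadjointPoint_of_apply_one_eq_zero h1, adCoeff₀_eq_zero (by omega) (by omega), mul_zero,
        add_zero]
  · rintro ⟨hx0, hx1, hx⟩
    refine ⟨fun i => if i.val = 2 then (x 3 - f 3) / f 0 else
      if i.val = 3 then (f 2 - x 2) / f 0 else 0, funext fun j => ?_⟩
    rw [coadjointPoint_of_apply_one_eq_zero h1]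
    obtain hj | hj | hj | hj | hj : j.val = 0 ∨ j.val = 1 ∨ j.val = 2 ∨ j.val = 3 ∨ 4 ≤ j.val := by
      omega
    · obtain rfl : j = 0 := Fin.ext hj
      simp [hx0, adCoeff₀]
    · obtain rfl : j = 1 := Fin.ext hj
      simp [hx1, h1, adCoeff₀]
    · obtain rfl : j = 2 := Fin.ext (by rw [hj, Fin.val_two])
      simp only [adCoeff₀, Fin.val_three, Fin.val_two]
      norm_num
      field_simp
      ring
    · obtain rfl : j = 3 := Fin.ext (by rw [hj, Fin.val_three])
      simp only [adCoeff₀, Fin.val_three, Fin.val_two]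
      norm_num
      field_simp
      ring
    · rw [adCoeff₀_eq_zero (by omega) (by omega), mul_zero, add_zero, hx j hj]

/- Solves `coadjointPoint f c = f + f 1 • d` for `c`: coordinates `0` and `4` give `c 2` and `c 3`,
then coordinates `2` and `3` give `c 0` and `c 4`, and each further coordinate gives `c` at its
partner in the pairs `(2m + 5, 2m + 6)`. -/
noncomputable def coadjointPreimage (f d : Fin (2*k+5) → ℝ) : Fin (2*k+5) → ℝ :=
  fun i => if i.val = 0 then -d 2 - (f 0 + 2⁻¹ * f 1 * d 0) * d 4 / f 1 else
    if i.val = 2 then d 0 else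
    if i.val = 4 then (f 0 + 2⁻¹ * f 1 * d 0) * d 0 / f 1 - d 3 else
    if i.val % 2 = 1 then d (i + 1) else -d (i - 1)

theorem coadjointPoint_coadjointPreimage {d : Fin (2*k+5) → ℝ} (h1 : f 1 ≠ 0) (hd1 : d 1 = 0)
    (j : Fin (2*k+5)) : coadjointPoint f (coadjointPreimage f d) j = f j + f 1 * d j := by
  have h34 : (3 : Fin (2*k+5)) + 1 = 4 :=
    Fin.ext (by rw [Fin.val_add_one_of_odd (by omega) (by rw [Fin.val_three]), Fin.val_three,
      Fin.val_four])
  obtain hj | hj | hj | hj | ⟨hj, hpar⟩ | ⟨hj, hpar⟩ : j.val = 0 ∨ j.val = 1 ∨ j.val = 2 ∨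
      j.val = 3 ∨ (4 ≤ j.val ∧ j.val % 2 = 0) ∨ (5 ≤ j.val ∧ j.val % 2 = 1) := by omega
  · obtain rfl : j = 0 := Fin.ext hj
    simp only [coadjointPoint, coadjointPreimage, adCoeff₀, adCoeff₁, Fin.val_zero, Fin.val_two]
    norm_num
  · obtain rfl : j = 1 := Fin.ext hj
    rw [coadjointPoint_one, hd1, mul_zero, add_zero]
  · obtain rfl : j = 2 := Fin.ext (by rw [hj, Fin.val_two])
    simp only [coadjointPoint, coadjointPreimage, adCoeff₀, adCoeff₁, Fin.val_zero, Fin.val_two,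
      Fin.val_three]
    norm_num
    rw [h34]
    field_simp
    ring
  · obtain rfl : j = 3 := Fin.ext (by rw [hj, Fin.val_three])
    have h4 : ((3 : Fin (2*k+5)) + 1).val = 4 := by rw [h34, Fin.val_four]
    simp only [coadjointPoint, coadjointPreimage, adCoeff₀, adCoeff₁, Fin.val_zero, Fin.val_two,
      Fin.val_three, h4]
    norm_num
    field_simp
    ring
  · have hj1 : (j - 1).val = j.val - 1 :=
      Fin.val_sub_one_of_ne_zero (Fin.ne_of_val_ne (by rw [Fin.val_zero]; omega))
    simp only [coadjointPoint, adCoeff₀_eq_zero (j := j) (by omega) (by omega),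
      adCoeff₁_of_even (j := j) (by omega) hpar, coadjointPreimage, hj1, mul_zero, add_zero]
    rw [if_neg (by omega), if_neg (by omega), if_neg (by omega), if_pos (by omega), sub_add_cancel]
  · have hj1 := Fin.val_add_one_of_odd (by omega) hpar
    simp only [coadjointPoint, adCoeff₀_eq_zero (j := j) (by omega) (by omega),
      adCoeff₁_of_odd (j := j) (by omega) hpar, coadjointPreimage, hj1, mul_zero, add_zero]
    rw [if_neg (by omega), if_neg (by omega), if_neg (by omega), if_neg (by omega),
      add_sub_cancel_right, neg_neg]

theorem range_coadjointPoint_eq_hyperplane (h1 : f 1 ≠ 0) :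
    Set.range (coadjointPoint f) = { x | x 1 = f 1 } := by
  ext x
  refine ⟨fun ⟨c, hc⟩ => hc ▸ coadjointPoint_one c, fun hx1 => ?_⟩
  obtain ⟨d, rfl⟩ : ∃ d : Fin (2*k+5) → ℝ, x = fun j => f j + f 1 * d j :=
    ⟨fun j => (x j - f j) / f 1, funext fun j => by field_simp; ring⟩
  have hd1 : d 1 = 0 := by simpa [h1] using hx1
  exact ⟨coadjointPreimage f d, funext (coadjointPoint_coadjointPreimage h1 hd1)⟩

end LieAlgebraG

/-- coadjoint orbit picture for `G_{5+2k}` (`k ≥ 0`; `[X3,X4]=X1`,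
`[X3,X1]=[X4,X5]=[X6,X7]=⋯=[X_{4+2k},X_{5+2k}]=X2`).
`Ω_F(G) = {F ∘ exp(ad_X) : X ∈ G}` in the coordinates of the dual basis. -/
theorem stmt_14 (k : ℕ) (L : Type) [LieRing L] [LieAlgebra ℝ L]
    (b : Module.Basis (Fin (2*k+5)) ℝ L)
    (hbracket : ∀ i j : Fin (2*k+5), ⁅b i, b j⁆ =
      (if i.val = 2 ∧ j.val = 3 then (1:ℝ) else
       if i.val = 3 ∧ j.val = 2 then -1 else 0) • b 0 +
      (if i.val = 2 ∧ j.val = 0 then (1:ℝ) else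
       if i.val = 0 ∧ j.val = 2 then -1 else
       if 3 ≤ i.val ∧ i.val % 2 = 1 ∧ j.val = i.val + 1 then 1 else
       if 3 ≤ j.val ∧ j.val % 2 = 1 ∧ i.val = j.val + 1 then -1 else 0) • b 1)
    (f : Fin (2*k+5) → ℝ) (Ω : Set (Fin (2*k+5) → ℝ))
    (hΩ : Ω = { y | ∃ X : L,
      y = Matrix.vecMul f (NormedSpace.exp ((LinearMap.toMatrix b b) (LieAlgebra.ad ℝ L X))) }) :
    (f 0 = 0 ∧ f 1 = 0 → Ω = {f}) ∧
    (f 1 = 0 ∧ f 0 ≠ 0 →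
      Ω = { x | x 0 = f 0 ∧ x 1 = 0 ∧ ∀ j : Fin (2*k+5), 4 ≤ j.val → x j = f j }) ∧
    (f 1 ≠ 0 → Ω = { x | x 1 = f 1 }) := by
  have hb : IsGBasis b := hbracket
  rw [hΩ, hb.setOf_vecMul_exp_ad f]
  exact ⟨fun ⟨h0, h1⟩ => range_coadjointPoint_eq_singleton h0 h1,
    fun ⟨h1, h0⟩ => range_coadjointPoint_eq_plane h1 h0, range_coadjointPoint_eq_hyperplane⟩
end

section
/- Let k ≥ 0, n = 6+2k, G = G_{6+2k,2}, and let F = (f1,…,f_n) ∈ G* ≅ ℝⁿ. If f1 = f2 = 0 then Ω_F(G) = {F}. If f2 = 0 ≠ f1 then Ω_F(G) = { x ∈ ℝⁿ : x1 = f1, x2 = 0, x_j = f_j for all j = 5,…,6+2k } (a 2-dimensional plane with x3, x4 free). If f2 ≠ 0 then Ω_F(G) = { x ∈ ℝⁿ : x2 = f2, x1² − 2·x2·x4 = f1² − 2·f2·f4 } (a (4+2k)-dimensional parabolic cylinder with x3, x5,…,x_{6+2k} free). -/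
/-!
In the basis `X₁, …, Xₙ`, `ad X` takes values in `span {X₁, X₂}`, so for `X = ∑ xᵢ Xᵢ` its matrix
`M` has only two nonzero rows, `x ᵥ* structConst₀` and `x ᵥ* structConst₁`. Hence `M ^ 3 = 0`
and `F ∘ exp (ad X) = F (1 + M + M ^ 2 / 2)` is the explicit quadratic map `orbitMap F x`; its
`X₂`-coordinate is `f₂` and `x₁ ^ 2 - 2 x₂ x₄` is invariant. Conversely, `structConst₀` and
`structConst₁` square to minus the identity on the coordinates they act on, which makes
`orbitMap F x = t` explicitly solvable for `x` whenever `t` lies in the claimed set.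
-/

open Matrix
open scoped Nat

theorem NormedSpace.exp_eq_sum_of_pow_eq_zero {𝔸 : Type*} [Ring 𝔸] [Algebra ℚ 𝔸]
    [TopologicalSpace 𝔸] [IsTopologicalRing 𝔸] [T2Space 𝔸] {a : 𝔸} {n : ℕ} (h : a ^ n = 0) :
    exp a = ∑ i ∈ Finset.range n, (i ! : ℚ)⁻¹ • a ^ i := by
  rw [exp_eq_tsum_rat]
  refine tsum_eq_sum fun i hi => ?_
  rw [pow_eq_zero_of_le (by simpa using hi) h, smul_zero]

theorem Matrix.vecMul_exp_vecMulVec_single_add {𝕜 ι : Type*} [Field 𝕜] [CharZero 𝕜]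
    [TopologicalSpace 𝕜] [IsTopologicalRing 𝕜] [T2Space 𝕜] [Fintype ι] [DecidableEq ι]
    (f a c : ι → 𝕜) (i₀ i₁ : ι) (ha₀ : a i₀ = 0) (ha₁ : a i₁ = 0) (hc₁ : c i₁ = 0) :
    f ᵥ* NormedSpace.exp (vecMulVec (Pi.single i₀ 1) a + vecMulVec (Pi.single i₁ 1) c) =
      f + (f i₀ + f i₁ * c i₀ / 2) • a + f i₁ • c := by
  set M := vecMulVec (Pi.single i₀ 1) a + vecMulVec (Pi.single i₁ 1) c
  have hM2 : M ^ 2 = vecMulVec (Pi.single i₁ 1) (c i₀ • a) := by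
    simp [M, sq, add_mul, mul_add, vecMulVec_mul_vecMulVec, ha₀, ha₁, hc₁]
  have hM3 : M ^ 3 = 0 := by
    simp [M, pow_succ, hM2, mul_add, vecMulVec_mul_vecMulVec, ha₀, ha₁]
  rw [NormedSpace.exp_eq_sum_of_pow_eq_zero hM3]
  simp only [Finset.sum_range_succ, Finset.sum_range_zero, hM2, vecMul_add, vecMul_smul,
    vecMul_vecMulVec, dotProduct_single, mul_one, pow_zero, pow_one, vecMul_one, M]
  ext i
  simp only [vecMul_zero, Nat.factorial_zero, Nat.factorial_one, Nat.factorial_two, Nat.cast_one,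
    Nat.cast_ofNat, inv_one, one_smul, zero_add, smul_add, Pi.add_apply, Pi.smul_apply, smul_eq_mul,
    Rat.smul_def, Rat.cast_inv, Rat.cast_ofNat]
  ring

section

variable {ι R : Type*} [Fintype ι] [NonUnitalNonAssocSemiring R] (x : ι → R) (M : Matrix ι ι R)

theorem Matrix.vecMul_apply_eq_of_col {j q : ι} (h : ∀ i ≠ j, M i q = 0) :
    (x ᵥ* M) q = x j * M j q :=
  Fintype.sum_eq_single j fun i hi => by simp [h i hi]

theorem Matrix.vecMul_apply_eq_zero_of_col {q : ι} (h : ∀ i, M i q = 0) : (x ᵥ* M) q = 0 :=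
  Finset.sum_eq_zero fun i _ => by simp [h i]

end

section

variable {R L ι : Type*} [CommRing R] [LieRing L] [LieAlgebra R L] [Fintype ι]
  (b : Module.Basis ι R L) (s₀ s₁ : Matrix ι ι R) (i₀ i₁ : ι)
  (h : ∀ i j, ⁅b i, b j⁆ = s₀ i j • b i₀ + s₁ i j • b i₁)
include h

theorem LieAlgebra.lie_basis_eq_vecMul (X : L) (j : ι) :
    ⁅X, b j⁆ = (b.equivFun X ᵥ* s₀) j • b i₀ + (b.equivFun X ᵥ* s₁) j • b i₁ := by
  conv_lhs => rw [← b.sum_equivFun X, sum_lie]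
  simp only [smul_lie, h, smul_add, smul_smul, Finset.sum_add_distrib, ← Finset.sum_smul]
  rfl

theorem LieAlgebra.toMatrix_ad_eq [DecidableEq ι] (X : L) :
    LinearMap.toMatrix b b (ad R L X) =
      vecMulVec (Pi.single i₀ 1) (b.equivFun X ᵥ* s₀) +
        vecMulVec (Pi.single i₁ 1) (b.equivFun X ᵥ* s₁) := by
  ext p q
  rw [LinearMap.toMatrix_apply, ad_apply, lie_basis_eq_vecMul b s₀ s₁ i₀ i₁ h]
  simp [Finsupp.single_apply, vecMulVec_apply, Pi.single_apply, eq_comm]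

end

namespace G62k

variable {k : ℕ}

theorem val_two : ((2 : Fin (2*k+6)) : ℕ) = 2 := rfl

theorem val_three : ((3 : Fin (2*k+6)) : ℕ) = 3 := rfl

theorem eq_or_four_le (q : Fin (2*k+6)) : q = 0 ∨ q = 1 ∨ q = 2 ∨ q = 3 ∨ 4 ≤ q.val := by
  simp only [Fin.ext_iff, Fin.val_zero, Fin.val_one, val_two, val_three]
  omega

theorem exists_pair_of_four_le {q : Fin (2*k+6)} (hq : 4 ≤ q.val) :
    ∃ i j : Fin (2*k+6), 4 ≤ i.val ∧ i.val % 2 = 0 ∧ j.val = i.val + 1 ∧ (q = i ∨ q = j) := by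
  rcases Nat.mod_two_eq_zero_or_one q.val with he | ho
  · exact ⟨q, ⟨q.val + 1, by omega⟩, hq, he, rfl, .inl rfl⟩
  · refine ⟨⟨q.val - 1, by omega⟩, q, ?_, ?_, ?_, .inr rfl⟩ <;> dsimp only <;> omega

/-- Structure constants of `G_{6+2k,2}` with index `i` standing for `X_{i+1}`:
`⁅b i, b j⁆ = structConst₀ i j • b 0 + structConst₁ i j • b 1`. -/
def structConst₀ (k : ℕ) : Matrix (Fin (2*k+6)) (Fin (2*k+6)) ℝ := fun i j =>
  if i.val = 2 ∧ j.val = 3 then 1 else if i.val = 3 ∧ j.val = 2 then -1 else 0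

def structConst₁ (k : ℕ) : Matrix (Fin (2*k+6)) (Fin (2*k+6)) ℝ := fun i j =>
  if i.val = 2 ∧ j.val = 0 then 1 else
  if i.val = 0 ∧ j.val = 2 then -1 else
  if 4 ≤ i.val ∧ i.val % 2 = 0 ∧ j.val = i.val + 1 then 1 else
  if 4 ≤ j.val ∧ j.val % 2 = 0 ∧ i.val = j.val + 1 then -1 else 0

section Coordinates

variable (x : Fin (2*k+6) → ℝ)

theorem vecMul_structConst₀_two : (x ᵥ* structConst₀ k) 2 = -x 3 := by
  rw [vecMul_apply_eq_of_col (j := 3)]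
  · simp only [structConst₀, val_two, val_three]; grind
  · intro i hi
    simp only [structConst₀, ne_eq, Fin.ext_iff, val_two, val_three] at hi ⊢
    grind

theorem vecMul_structConst₀_three : (x ᵥ* structConst₀ k) 3 = x 2 := by
  rw [vecMul_apply_eq_of_col (j := 2)]
  · simp only [structConst₀, val_two, val_three]; grind
  · intro i hi
    simp only [structConst₀, ne_eq, Fin.ext_iff, val_two, val_three] at hi ⊢
    grind

theorem vecMul_structConst₀_eq_zero {q : Fin (2*k+6)} (h2 : q.val ≠ 2) (h3 : q.val ≠ 3) :
    (x ᵥ* structConst₀ k) q = 0 :=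
  vecMul_apply_eq_zero_of_col _ _ fun i => by simp only [structConst₀]; grind

theorem vecMul_structConst₁_zero : (x ᵥ* structConst₁ k) 0 = x 2 := by
  rw [vecMul_apply_eq_of_col (j := 2)]
  · simp only [structConst₁, Fin.val_zero, val_two]; grind
  · intro i hi
    simp only [structConst₁, ne_eq, Fin.ext_iff, Fin.val_zero, val_two] at hi ⊢
    grind

theorem vecMul_structConst₁_one : (x ᵥ* structConst₁ k) 1 = 0 :=
  vecMul_apply_eq_zero_of_col _ _ fun i => by simp only [structConst₁, Fin.val_one]; grind

theorem vecMul_structConst₁_two : (x ᵥ* structConst₁ k) 2 = -x 0 := by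
  rw [vecMul_apply_eq_of_col (j := 0)]
  · simp only [structConst₁, Fin.val_zero, val_two]; grind
  · intro i hi
    simp only [structConst₁, ne_eq, Fin.ext_iff, Fin.val_zero, val_two] at hi ⊢
    grind

theorem vecMul_structConst₁_three : (x ᵥ* structConst₁ k) 3 = 0 :=
  vecMul_apply_eq_zero_of_col _ _ fun i => by simp only [structConst₁, val_three]; grind

section Pair

variable {i j : Fin (2*k+6)} (hi : 4 ≤ i.val) (he : i.val % 2 = 0) (hj : j.val = i.val + 1)
include hi he hj

theorem vecMul_structConst₁_of_pair_left : (x ᵥ* structConst₁ k) i = -x j := by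
  rw [vecMul_apply_eq_of_col (j := j)]
  · simp only [structConst₁]; grind
  · intro l hl
    simp only [structConst₁, ne_eq, Fin.ext_iff] at hl ⊢
    grind

theorem vecMul_structConst₁_of_pair_right : (x ᵥ* structConst₁ k) j = x i := by
  rw [vecMul_apply_eq_of_col (j := i)]
  · simp only [structConst₁]; grind
  · intro l hl
    simp only [structConst₁, ne_eq, Fin.ext_iff] at hl ⊢
    grind

end Pair

theorem vecMul_structConst₁_vecMul_structConst₁ {q : Fin (2*k+6)} (h1 : q.val ≠ 1)
    (h3 : q.val ≠ 3) :
    (x ᵥ* structConst₁ k ᵥ* structConst₁ k) q = -x q := by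
  rcases eq_or_four_le q with rfl | rfl | rfl | rfl | hq
  · rw [vecMul_structConst₁_zero, vecMul_structConst₁_two]
  · simp at h1
  · rw [vecMul_structConst₁_two, vecMul_structConst₁_zero]
  · exact absurd val_three h3
  · obtain ⟨i, j, hi, he, hj, rfl | rfl⟩ := exists_pair_of_four_le hq
    · rw [vecMul_structConst₁_of_pair_left _ hi he hj,
        vecMul_structConst₁_of_pair_right _ hi he hj]
    · rw [vecMul_structConst₁_of_pair_right _ hi he hj,
        vecMul_structConst₁_of_pair_left _ hi he hj]

end Coordinates

noncomputable def orbitMap (f x : Fin (2*k+6) → ℝ) : Fin (2*k+6) → ℝ :=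
  f + (f 0 + f 1 * x 2 / 2) • (x ᵥ* structConst₀ k) + f 1 • (x ᵥ* structConst₁ k)

theorem orbitMap_apply (f x : Fin (2*k+6) → ℝ) (q : Fin (2*k+6)) :
    orbitMap f x q =
      f q + (f 0 + f 1 * x 2 / 2) * (x ᵥ* structConst₀ k) q + f 1 * (x ᵥ* structConst₁ k) q :=
  rfl

theorem vecMul_exp_ad {L : Type*} [LieRing L] [LieAlgebra ℝ L]
    (b : Module.Basis (Fin (2*k+6)) ℝ L)
    (h : ∀ i j, ⁅b i, b j⁆ = structConst₀ k i j • b 0 + structConst₁ k i j • b 1)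
    (f : Fin (2*k+6) → ℝ) (X : L) :
    f ᵥ* NormedSpace.exp (LinearMap.toMatrix b b (LieAlgebra.ad ℝ L X)) =
      orbitMap f (b.equivFun X) := by
  rw [LieAlgebra.toMatrix_ad_eq b _ _ 0 1 h, vecMul_exp_vecMulVec_single_add,
    vecMul_structConst₁_zero]
  · rfl
  · exact vecMul_structConst₀_eq_zero _ (by simp) (by simp)
  · exact vecMul_structConst₀_eq_zero _ (by simp) (by simp)
  · exact vecMul_structConst₁_one _

variable (f : Fin (2*k+6) → ℝ)

theorem range_orbitMap_eq_singleton (h0 : f 0 = 0) (h1 : f 1 = 0) :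
    Set.range (orbitMap f) = {f} := by
  have hconst : orbitMap f = fun _ => f := funext fun x => by simp [orbitMap, h0, h1]
  rw [hconst, Set.range_const]

theorem orbitMap_apply_of_apply_one_eq_zero (h1 : f 1 = 0) (x : Fin (2*k+6) → ℝ) (q : Fin (2*k+6)) :
    orbitMap f x q = f q + f 0 * (x ᵥ* structConst₀ k) q := by
  rw [orbitMap_apply, h1]; ring

theorem range_orbitMap_eq_plane (h1 : f 1 = 0) (h0 : f 0 ≠ 0) :
    Set.range (orbitMap f) =
      {t | t 0 = f 0 ∧ t 1 = 0 ∧ ∀ j : Fin (2*k+6), 4 ≤ j.val → t j = f j} := by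
  ext t
  constructor
  · rintro ⟨x, rfl⟩
    have hfix (q : Fin (2*k+6)) (h2 : q.val ≠ 2) (h3 : q.val ≠ 3) : orbitMap f x q = f q := by
      rw [orbitMap_apply_of_apply_one_eq_zero f h1, vecMul_structConst₀_eq_zero x h2 h3, mul_zero,
        add_zero]
    exact ⟨hfix 0 (by simp) (by simp), (hfix 1 (by simp) (by simp)).trans h1,
      fun j hj => hfix j (by omega) (by omega)⟩
  · rintro ⟨ht0, ht1, ht⟩
    set d := (f 0)⁻¹ • (t - f)
    have hd (q : Fin (2*k+6)) : f q + f 0 * d q = t q := by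
      simp only [d, Pi.smul_apply, Pi.sub_apply, smul_eq_mul]; field_simp; ring
    refine ⟨-(d ᵥ* structConst₀ k), funext fun q => ?_⟩
    rw [orbitMap_apply_of_apply_one_eq_zero f h1, neg_vecMul, Pi.neg_apply]
    rcases eq_or_four_le q with rfl | rfl | rfl | rfl | hq
    · rw [vecMul_structConst₀_eq_zero _ (by simp) (by simp), ht0]; ring
    · rw [vecMul_structConst₀_eq_zero _ (by simp) (by simp), ht1, h1]; ring
    · rw [vecMul_structConst₀_two, vecMul_structConst₀_three, neg_neg, hd]
    · rw [vecMul_structConst₀_three, vecMul_structConst₀_two, neg_neg, hd]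
    · rw [vecMul_structConst₀_eq_zero _ (by omega) (by omega), ht q hq]; ring

theorem range_orbitMap_eq_parabolicCylinder (h1 : f 1 ≠ 0) :
    Set.range (orbitMap f) =
      {t | t 1 = f 1 ∧ t 0 ^ 2 - 2 * t 1 * t 3 = f 0 ^ 2 - 2 * f 1 * f 3} := by
  ext t
  constructor
  · rintro ⟨x, rfl⟩
    simp only [Set.mem_ofPred_eq, orbitMap_apply, vecMul_structConst₀_three,
      vecMul_structConst₁_zero, vecMul_structConst₁_one, vecMul_structConst₁_three,
      vecMul_structConst₀_eq_zero x (q := 0) (by simp) (by simp),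
      vecMul_structConst₀_eq_zero x (q := 1) (by simp) (by simp)]
    constructor <;> ring
  · rintro ⟨ht1, hinv⟩
    set d := (f 1)⁻¹ • (t - f)
    set x := -(d ᵥ* structConst₁ k)
    have hd (q : Fin (2*k+6)) : f q + f 1 * d q = t q := by
      simp only [d, Pi.smul_apply, Pi.sub_apply, smul_eq_mul]; field_simp; ring
    have hx (q : Fin (2*k+6)) (h1 : q.val ≠ 1) (h3 : q.val ≠ 3) :
        (x ᵥ* structConst₁ k) q = d q := by
      rw [neg_vecMul, Pi.neg_apply, vecMul_structConst₁_vecMul_structConst₁ _ h1 h3, neg_neg]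
    have hx2 : x 2 = d 0 := by simp [x, vecMul_structConst₁_two]
    have hx3 : x 3 = 0 := by simp [x, vecMul_structConst₁_three]
    have hcasimir : (f 0 + f 1 * d 0 / 2) * d 0 = t 3 - f 3 := by
      simp only [d, Pi.smul_apply, Pi.sub_apply, smul_eq_mul]
      field_simp
      linear_combination hinv + 2 * t 3 * ht1
    refine ⟨x, funext fun q => ?_⟩
    rw [orbitMap_apply]
    rcases eq_or_four_le q with rfl | rfl | rfl | rfl | hq
    · rw [vecMul_structConst₀_eq_zero _ (by simp) (by simp), hx 0 (by simp) (by simp), ← hd]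
      ring
    · rw [vecMul_structConst₀_eq_zero _ (by simp) (by simp), vecMul_structConst₁_one, ht1]; ring
    · rw [vecMul_structConst₀_two, hx3, hx 2 (by rw [val_two]; omega) (by rw [val_two]; omega),
        ← hd]
      ring
    · rw [vecMul_structConst₀_three, vecMul_structConst₁_three, hx2]
      linear_combination hcasimir
    · rw [vecMul_structConst₀_eq_zero _ (by omega) (by omega), hx q (by omega) (by omega), ← hd]
      ring

end G62k

/-- coadjoint orbit picture for `G_{6+2k,2}` (`k ≥ 0`; `[X3,X4]=X1`,
`[X3,X1]=[X5,X6]=⋯=[X_{5+2k},X_{6+2k}]=X2`).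
`Ω_F(G) = {F ∘ exp(ad_X) : X ∈ G}` in the coordinates of the dual basis. -/
theorem stmt_16 (k : ℕ) (L : Type) [LieRing L] [LieAlgebra ℝ L]
    (b : Module.Basis (Fin (2*k+6)) ℝ L)
    (hbracket : ∀ i j : Fin (2*k+6), ⁅b i, b j⁆ =
      (if i.val = 2 ∧ j.val = 3 then (1:ℝ) else
       if i.val = 3 ∧ j.val = 2 then -1 else 0) • b 0 +
      (if i.val = 2 ∧ j.val = 0 then (1:ℝ) else
       if i.val = 0 ∧ j.val = 2 then -1 else
       if 4 ≤ i.val ∧ i.val % 2 = 0 ∧ j.val = i.val + 1 then 1 else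
       if 4 ≤ j.val ∧ j.val % 2 = 0 ∧ i.val = j.val + 1 then -1 else 0) • b 1)
    (f : Fin (2*k+6) → ℝ) (Ω : Set (Fin (2*k+6) → ℝ))
    (hΩ : Ω = { y | ∃ X : L,
      y = Matrix.vecMul f (NormedSpace.exp ((LinearMap.toMatrix b b) (LieAlgebra.ad ℝ L X))) }) :
    (f 0 = 0 ∧ f 1 = 0 → Ω = {f}) ∧
    (f 1 = 0 ∧ f 0 ≠ 0 →
      Ω = { x | x 0 = f 0 ∧ x 1 = 0 ∧ ∀ j : Fin (2*k+6), 4 ≤ j.val → x j = f j }) ∧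
    (f 1 ≠ 0 →
      Ω = { x | x 1 = f 1 ∧ (x 0)^2 - 2 * x 1 * x 3 = (f 0)^2 - 2 * f 1 * f 3 }) := by
  have hΩrange : Ω = Set.range (G62k.orbitMap f) := by
    rw [hΩ, ← b.equivFun.surjective.range_comp]
    ext y
    simp only [Set.mem_ofPred_eq, Set.mem_range, Function.comp_apply,
      G62k.vecMul_exp_ad b hbracket, eq_comm]
  subst hΩrange
  exact ⟨fun ⟨h0, h1⟩ => G62k.range_orbitMap_eq_singleton f h0 h1,
    fun ⟨h1, h0⟩ => G62k.range_orbitMap_eq_plane f h1 h0,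
    G62k.range_orbitMap_eq_parabolicCylinder f⟩
end

section
/- Let k ≥ 0 and let V = { x ∈ ℝ^{6+2k} : x2 ≠ 0 }. Then V is open in ℝ^{6+2k}, and each of the two families of subsets L¹_{c1,c2} := { x ∈ V : x2 = c2, x1·e^{−x4/x2} = c1 } and L²_{c1,c2} := { x ∈ V : x2 = c2, x1² − 2·x2·x4 = c1 }, indexed by (c1,c2) ∈ ℝ × (ℝ∖{0}), is a partition of V into pairwise disjoint nonempty sets; moreover every L¹_{c1,c2} and every L²_{c1,c2} is homeomorphic to ℝ^{4+2k} (in particular connected and simply connected). These sets are precisely the maximal dimensional coadjoint orbits of G_{6+2k,1} and G_{6+2k,2}, respectively, which therefore form the leaves of a (4+2k)-dimensional foliation of V. -/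
/-!
Both leaves are graphs: on `x 1 = c₂ ≠ 0` the defining equation of `L¹` solves to
`x 0 = c₁ · exp (x 3 / c₂)` and that of `L²` to `x 3 = (x 0 ² - c₁) / (2 c₂)`. So each leaf is a
graph over the `2k + 4` coordinates other than the two it pins down, hence homeomorphic to
`ℝ^{2k+4}`.
-/

open Real

def Fin.sliceGraphHomeomorph {α : Type*} [TopologicalSpace α] {n : ℕ}
    (i : Fin (n + 2)) (j : Fin (n + 1)) (c : α) {φ : (Fin n → α) → α} (hφ : Continuous φ) :
    {x : Fin (n + 2) → α | x i = c ∧ x (i.succAbove j) = φ (j.removeNth (i.removeNth x))} ≃ₜ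
      (Fin n → α) where
  toFun x := j.removeNth (i.removeNth x.1)
  invFun y := ⟨i.insertNth c (j.insertNth (φ y) y), by simp⟩
  left_inv := by
    rintro ⟨x, hi, hj⟩
    ext1
    dsimp only
    have hx := j.insertNth_self_removeNth (i.removeNth x)
    rw [Fin.removeNth_apply] at hx
    rw [← hi, ← hj, hx, i.insertNth_self_removeNth]
  right_inv y := by simp
  continuous_toFun := continuous_pi fun m =>
    (continuous_apply (i.succAbove (j.succAbove m))).comp continuous_subtype_val
  continuous_invFun := by fun_prop

lemma sep_setOf_ne_zero_eq {X : Type*} (g : X → ℝ) {c : ℝ} (hc : c ≠ 0) (P : X → Prop) :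
    {x ∈ {x | g x ≠ 0} | g x = c ∧ P x} = {x | g x = c ∧ P x} :=
  Set.ext fun _ => ⟨And.right, fun h => ⟨h.1.trans_ne hc, h⟩⟩

lemma disjoint_sep_of_ne {X β γ : Type*} {V : Set X} {f : X → β} {g : X → γ} {b b' : β}
    {c c' : γ} (h : (b, c) ≠ (b', c')) :
    Disjoint {x ∈ V | g x = c ∧ f x = b} {x ∈ V | g x = c' ∧ f x = b'} :=
  Set.disjoint_left.2 fun _ hx hx' =>
    h (Prod.ext (hx.2.2.symm.trans hx'.2.2) (hx.2.1.symm.trans hx'.2.1))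

lemma mul_exp_neg_div_eq_iff {a b c d : ℝ} : a * exp (-b / d) = c ↔ a = c * exp (b / d) := by
  rw [neg_div, exp_neg, mul_inv_eq_iff_eq_mul₀ (exp_ne_zero _)]

lemma sq_sub_two_mul_eq_iff {a b c d : ℝ} (hd : d ≠ 0) :
    a ^ 2 - 2 * d * b = c ↔ b = (a ^ 2 - c) / (2 * d) := by
  rw [eq_div_iff (mul_ne_zero two_ne_zero hd)]
  constructor <;> intro h <;> linarith

noncomputable def leafExpHomeomorph {n : ℕ} (c1 : ℝ) {c2 : ℝ} (hc2 : c2 ≠ 0) :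
    {x ∈ {x : Fin (n + 4) → ℝ | x 1 ≠ 0} | x 1 = c2 ∧ x 0 * exp (-(x 3) / x 1) = c1} ≃ₜ
      (Fin (n + 2) → ℝ) :=
  (Homeomorph.setCongr <| by
      rw [sep_setOf_ne_zero_eq _ hc2]
      -- the slice-graph set, up to unfolding `succAbove` and `removeNth` on numerals
      show _ = {x : Fin (n + 4) → ℝ | x 1 = c2 ∧ x 0 = c1 * exp (x 3 / c2)}
      ext x
      exact and_congr_right fun h => by rw [h, mul_exp_neg_div_eq_iff]).trans
    (Fin.sliceGraphHomeomorph 1 0 c2 (φ := fun y => c1 * exp (y 1 / c2)) (by fun_prop))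

noncomputable def leafQuadHomeomorph {n : ℕ} (c1 : ℝ) {c2 : ℝ} (hc2 : c2 ≠ 0) :
    {x ∈ {x : Fin (n + 4) → ℝ | x 1 ≠ 0} | x 1 = c2 ∧ x 0 ^ 2 - 2 * x 1 * x 3 = c1} ≃ₜ
      (Fin (n + 2) → ℝ) :=
  (Homeomorph.setCongr <| by
      rw [sep_setOf_ne_zero_eq _ hc2]
      show _ = {x : Fin (n + 4) → ℝ | x 1 = c2 ∧ x 3 = (x 0 ^ 2 - c1) / (2 * c2)}
      ext x
      exact and_congr_right fun h => by rw [h, sq_sub_two_mul_eq_iff hc2]).trans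
    (Fin.sliceGraphHomeomorph 1 2 c2 (φ := fun y => (y 0 ^ 2 - c1) / (2 * c2)) (by fun_prop))

/-- `V = {x ∈ ℝ^{6+2k} : x2 ≠ 0}` is open, each of the two families
`L¹_{c1,c2} = {x ∈ V : x2 = c2, x1·e^{−x4/x2} = c1}` and
`L²_{c1,c2} = {x ∈ V : x2 = c2, x1² − 2x2x4 = c1}` (for `(c1,c2) ∈ ℝ × (ℝ∖{0})`) is a
partition of `V` into pairwise disjoint nonempty sets, and each `L¹_{c1,c2}` and each
`L²_{c1,c2}` is homeomorphic to `ℝ^{4+2k}` (the leaves of the maximal-dimensional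
coadjoint-orbit foliations of `G_{6+2k,1}` and `G_{6+2k,2}`). -/
theorem stmt_17 (k : ℕ) (V : Set (Fin (2*k+6) → ℝ)) (hV : V = { x | x 1 ≠ 0 })
    (L1 L2 : ℝ → ℝ → Set (Fin (2*k+6) → ℝ))
    (hL1 : ∀ c1 c2 : ℝ, L1 c1 c2 =
      { x ∈ V | x 1 = c2 ∧ x 0 * Real.exp (-(x 3) / x 1) = c1 })
    (hL2 : ∀ c1 c2 : ℝ, L2 c1 c2 =
      { x ∈ V | x 1 = c2 ∧ (x 0)^2 - 2 * x 1 * x 3 = c1 }) :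
    IsOpen V ∧
    -- the family L¹ is a partition of V into pairwise disjoint nonempty sets
    (∀ c1 c2 : ℝ, c2 ≠ 0 → (L1 c1 c2).Nonempty) ∧
    (∀ c1 c2 c1' c2' : ℝ, c2 ≠ 0 → c2' ≠ 0 → (c1, c2) ≠ (c1', c2') →
      Disjoint (L1 c1 c2) (L1 c1' c2')) ∧
    (∀ x ∈ V, ∃ c1 c2 : ℝ, c2 ≠ 0 ∧ x ∈ L1 c1 c2) ∧
    -- the family L² is a partition of V into pairwise disjoint nonempty sets
    (∀ c1 c2 : ℝ, c2 ≠ 0 → (L2 c1 c2).Nonempty) ∧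
    (∀ c1 c2 c1' c2' : ℝ, c2 ≠ 0 → c2' ≠ 0 → (c1, c2) ≠ (c1', c2') →
      Disjoint (L2 c1 c2) (L2 c1' c2')) ∧
    (∀ x ∈ V, ∃ c1 c2 : ℝ, c2 ≠ 0 ∧ x ∈ L2 c1 c2) ∧
    -- every leaf is homeomorphic to ℝ^{4+2k}
    (∀ c1 c2 : ℝ, c2 ≠ 0 → Nonempty (↥(L1 c1 c2) ≃ₜ (Fin (2*k+4) → ℝ))) ∧
    (∀ c1 c2 : ℝ, c2 ≠ 0 → Nonempty (↥(L2 c1 c2) ≃ₜ (Fin (2*k+4) → ℝ))) := by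
  subst hV
  obtain rfl : L1 = _ := funext₂ hL1
  obtain rfl : L2 = _ := funext₂ hL2
  have e1 := fun c1 {c2} (hc2 : c2 ≠ 0) => leafExpHomeomorph (n := 2 * k + 2) c1 hc2
  have e2 := fun c1 {c2} (hc2 : c2 ≠ 0) => leafQuadHomeomorph (n := 2 * k + 2) c1 hc2
  exact ⟨isOpen_ne_fun (continuous_apply 1) continuous_const,
    fun c1 _ hc2 => ⟨_, ((e1 c1 hc2).symm 0).2⟩, fun _ _ _ _ _ _ => disjoint_sep_of_ne,
    fun x hx => ⟨_, x 1, hx, hx, rfl, rfl⟩,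
    fun c1 _ hc2 => ⟨_, ((e2 c1 hc2).symm 0).2⟩, fun _ _ _ _ _ _ => disjoint_sep_of_ne,
    fun x hx => ⟨_, x 1, hx, hx, rfl, rfl⟩,
    fun c1 _ hc2 => ⟨e1 c1 hc2⟩, fun c1 _ hc2 => ⟨e2 c1 hc2⟩⟩
end

section
/- Let k ≥ 0 and V = { x ∈ ℝ^{6+2k} : x2 ≠ 0 }. There exists a homeomorphism h : V → V such that the image under h of each set L¹_{c1,c2} := { x ∈ V : x2 = c2, x1·e^{−x4/x2} = c1 } (with (c1,c2) ∈ ℝ × (ℝ∖{0})) is a set of the form L²_{c1',c2'} := { x ∈ V : x2 = c2', x1² − 2·x2·x4 = c1' } for some (c1',c2') ∈ ℝ × (ℝ∖{0}), and every set L²_{c1',c2'} is the image of some L¹_{c1,c2}. In other words, the two foliations of V whose leaves are the families {L¹_{c1,c2}} and {L²_{c1,c2}} (the maximal-dimensional coadjoint orbit foliations of G_{6+2k,1} and G_{6+2k,2}) are topologically equivalent. -/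
/-!
Both foliations are the level sets, inside `V`, of a pair of functions: `(x2, x1 e^{-x4/x2})`
for the first and `(x2, x1² - 2 x2 x4)` for the second. The map that keeps every coordinate except
`x1 ↦ x4` and `x4 ↦ (x4² - x1 e^{-x4/x2}) / (2 x2)` carries the first pair onto the second, and it
is a homeomorphism of `V` whose inverse `x1 ↦ (x1² - 2 x2 x4) e^{x1/x2}`, `x4 ↦ x1` is explicit.
Hence it maps each leaf `L¹_{c1,c2}` onto `L²_{c1,c2}`.
-/

open Function Real

theorem Subtype.val_image_image_sep_eq {α β : Type*} {V : Set α} (h : V ≃ V) {f g : α → β}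
    (hgf : ∀ x : V, g (h x) = f x) (s : Set β) :
    Subtype.val '' (h '' (Subtype.val ⁻¹' {x ∈ V | f x ∈ s})) = {x ∈ V | g x ∈ s} := by
  ext y
  constructor
  · rintro ⟨_, ⟨x, ⟨-, hx⟩, rfl⟩, rfl⟩
    exact ⟨(h x).2, (hgf x).symm ▸ hx⟩
  · rintro ⟨hyV, hy⟩
    refine ⟨⟨y, hyV⟩, ⟨h.symm ⟨y, hyV⟩, ⟨(h.symm ⟨y, hyV⟩).2, ?_⟩, h.apply_symm_apply _⟩, rfl⟩
    rw [← hgf, h.apply_symm_apply]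
    exact hy

theorem continuous_subtype_val_apply {ι : Type*} (i : ι) {p : (ι → ℝ) → Prop} :
    Continuous fun x : Subtype p => (x : ι → ℝ) i :=
  (continuous_apply i).comp continuous_subtype_val

section LeafMap

-- `i₁ i₂ i₄` are the positions of the coordinates `x1 x2 x4` (indices `0 1 3` of `Fin (2*k+6)`).
variable {ι : Type*} [DecidableEq ι] {i₁ i₂ i₄ : ι}

variable (i₁ i₂ i₄) in
noncomputable def leafInvariants₁ (x : ι → ℝ) : ℝ × ℝ := (x i₂, x i₁ * exp (-x i₄ / x i₂))

variable (i₁ i₂ i₄) in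
def leafInvariants₂ (x : ι → ℝ) : ℝ × ℝ := (x i₂, x i₁ ^ 2 - 2 * x i₂ * x i₄)

variable (i₁ i₂ i₄) in
noncomputable def leafMap (x : ι → ℝ) : ι → ℝ :=
  update (update x i₁ (x i₄)) i₄ ((x i₄ ^ 2 - x i₁ * exp (-x i₄ / x i₂)) / (2 * x i₂))

variable (i₁ i₂ i₄) in
noncomputable def leafMapInv (y : ι → ℝ) : ι → ℝ :=
  update (update y i₄ (y i₁)) i₁ ((y i₁ ^ 2 - 2 * y i₂ * y i₄) * exp (y i₁ / y i₂))

theorem leafMap_apply_of_ne {i : ι} (h₁ : i ≠ i₁) (h₄ : i ≠ i₄) (x : ι → ℝ) :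
    leafMap i₁ i₂ i₄ x i = x i := by
  rw [leafMap, update_of_ne h₄, update_of_ne h₁]

theorem leafMapInv_apply_of_ne {i : ι} (h₁ : i ≠ i₁) (h₄ : i ≠ i₄) (y : ι → ℝ) :
    leafMapInv i₁ i₂ i₄ y i = y i := by
  rw [leafMapInv, update_of_ne h₁, update_of_ne h₄]

theorem leafMap_apply₁ (h₁₄ : i₁ ≠ i₄) (x : ι → ℝ) : leafMap i₁ i₂ i₄ x i₁ = x i₄ := by
  rw [leafMap, update_of_ne h₁₄, update_self]

theorem leafMap_apply₄ (x : ι → ℝ) :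
    leafMap i₁ i₂ i₄ x i₄ = (x i₄ ^ 2 - x i₁ * exp (-x i₄ / x i₂)) / (2 * x i₂) := by
  rw [leafMap, update_self]

theorem leafMapInv_apply₁ (y : ι → ℝ) :
    leafMapInv i₁ i₂ i₄ y i₁ = (y i₁ ^ 2 - 2 * y i₂ * y i₄) * exp (y i₁ / y i₂) := by
  rw [leafMapInv, update_self]

theorem leafMapInv_apply₄ (h₁₄ : i₁ ≠ i₄) (y : ι → ℝ) : leafMapInv i₁ i₂ i₄ y i₄ = y i₁ := by
  rw [leafMapInv, update_of_ne h₁₄.symm, update_self]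

theorem leafMap_invariant (h₁₄ : i₁ ≠ i₄) {x : ι → ℝ} (hx : x i₂ ≠ 0) :
    leafMap i₁ i₂ i₄ x i₁ ^ 2 - 2 * x i₂ * leafMap i₁ i₂ i₄ x i₄ =
      x i₁ * exp (-x i₄ / x i₂) := by
  rw [leafMap_apply₁ h₁₄, leafMap_apply₄]
  field_simp
  ring

theorem leafInvariants₂_leafMap (h₁₂ : i₁ ≠ i₂) (h₁₄ : i₁ ≠ i₄) (h₂₄ : i₂ ≠ i₄) {x : ι → ℝ}
    (hx : x i₂ ≠ 0) :
    leafInvariants₂ i₁ i₂ i₄ (leafMap i₁ i₂ i₄ x) = leafInvariants₁ i₁ i₂ i₄ x := by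
  have hx₂ : leafMap i₁ i₂ i₄ x i₂ = x i₂ := leafMap_apply_of_ne h₁₂.symm h₂₄ x
  rw [leafInvariants₂, leafInvariants₁, hx₂, leafMap_invariant h₁₄ hx]

theorem leafMapInv_leafMap (h₁₂ : i₁ ≠ i₂) (h₁₄ : i₁ ≠ i₄) (h₂₄ : i₂ ≠ i₄) {x : ι → ℝ}
    (hx : x i₂ ≠ 0) : leafMapInv i₁ i₂ i₄ (leafMap i₁ i₂ i₄ x) = x := by
  have hx₂ : leafMap i₁ i₂ i₄ x i₂ = x i₂ := leafMap_apply_of_ne h₁₂.symm h₂₄ x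
  ext i
  rcases eq_or_ne i i₁ with rfl | hi₁
  · rw [leafMapInv_apply₁, hx₂, leafMap_invariant h₁₄ hx, leafMap_apply₁ h₁₄,
      mul_assoc, ← exp_add, neg_div, neg_add_cancel, exp_zero, mul_one]
  rcases eq_or_ne i i₄ with rfl | hi₄
  · rw [leafMapInv_apply₄ h₁₄, leafMap_apply₁ h₁₄]
  · rw [leafMapInv_apply_of_ne hi₁ hi₄, leafMap_apply_of_ne hi₁ hi₄]

theorem leafMap_leafMapInv (h₁₂ : i₁ ≠ i₂) (h₁₄ : i₁ ≠ i₄) (h₂₄ : i₂ ≠ i₄) {y : ι → ℝ}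
    (hy : y i₂ ≠ 0) : leafMap i₁ i₂ i₄ (leafMapInv i₁ i₂ i₄ y) = y := by
  have hy₂ : leafMapInv i₁ i₂ i₄ y i₂ = y i₂ := leafMapInv_apply_of_ne h₁₂.symm h₂₄ y
  ext i
  rcases eq_or_ne i i₁ with rfl | hi₁
  · rw [leafMap_apply₁ h₁₄, leafMapInv_apply₄ h₁₄]
  rcases eq_or_ne i i₄ with rfl | hi₄
  · rw [leafMap_apply₄, hy₂, leafMapInv_apply₁, leafMapInv_apply₄ h₁₄, neg_div,
      exp_neg]
    field_simp
    ring
  · rw [leafMap_apply_of_ne hi₁ hi₄, leafMapInv_apply_of_ne hi₁ hi₄]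

noncomputable def leafHomeomorph (h₁₂ : i₁ ≠ i₂) (h₁₄ : i₁ ≠ i₄) (h₂₄ : i₂ ≠ i₄) :
    {x : ι → ℝ | x i₂ ≠ 0} ≃ₜ {x : ι → ℝ | x i₂ ≠ 0} where
  toFun x := ⟨leafMap i₁ i₂ i₄ x, show leafMap i₁ i₂ i₄ x i₂ ≠ 0 by
    rw [leafMap_apply_of_ne h₁₂.symm h₂₄]; exact x.2⟩
  invFun y := ⟨leafMapInv i₁ i₂ i₄ y, show leafMapInv i₁ i₂ i₄ y i₂ ≠ 0 by
    rw [leafMapInv_apply_of_ne h₁₂.symm h₂₄]; exact y.2⟩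
  left_inv x := Subtype.ext (leafMapInv_leafMap h₁₂ h₁₄ h₂₄ x.2)
  right_inv y := Subtype.ext (leafMap_leafMapInv h₁₂ h₁₄ h₂₄ y.2)
  continuous_toFun := by
    have c := continuous_subtype_val_apply (p := (· ∈ {x : ι → ℝ | x i₂ ≠ 0}))
    refine .subtype_mk (.update (.update continuous_subtype_val _ (c i₄)) _ ?_) _
    exact (((c i₄).pow 2).sub ((c i₁).mul (((c i₄).neg.div (c i₂) fun x => x.2).rexp))).div
      (continuous_const.mul (c i₂)) fun x => mul_ne_zero two_ne_zero x.2
  continuous_invFun := by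
    have c := continuous_subtype_val_apply (p := (· ∈ {x : ι → ℝ | x i₂ ≠ 0}))
    refine .subtype_mk (.update (.update continuous_subtype_val _ (c i₁)) _ ?_) _
    exact (((c i₁).pow 2).sub ((continuous_const.mul (c i₂)).mul (c i₄))).mul
      ((c i₁).div (c i₂) fun x => x.2).rexp

end LeafMap

/-- there is a homeomorphism `h : V → V` of `V = {x ∈ ℝ^{6+2k} : x2 ≠ 0}`
sending each leaf `L¹_{c1,c2} = {x ∈ V : x2 = c2, x1·e^{−x4/x2} = c1}` onto a leaf
`L²_{c1',c2'} = {x ∈ V : x2 = c2', x1² − 2x2x4 = c1'}`, with every `L²_{c1',c2'}` arising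
as such an image: the two maximal-dimensional coadjoint-orbit foliations of `G_{6+2k,1}`
and `G_{6+2k,2}` are topologically equivalent. -/
theorem stmt_18 (k : ℕ) (V : Set (Fin (2*k+6) → ℝ)) (hV : V = { x | x 1 ≠ 0 })
    (L1 L2 : ℝ → ℝ → Set (Fin (2*k+6) → ℝ))
    (hL1 : ∀ c1 c2 : ℝ, L1 c1 c2 =
      { x ∈ V | x 1 = c2 ∧ x 0 * Real.exp (-(x 3) / x 1) = c1 })
    (hL2 : ∀ c1 c2 : ℝ, L2 c1 c2 =
      { x ∈ V | x 1 = c2 ∧ (x 0)^2 - 2 * x 1 * x 3 = c1 }) :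
    ∃ h : ↥V ≃ₜ ↥V,
      (∀ c1 c2 : ℝ, c2 ≠ 0 → ∃ c1' c2' : ℝ, c2' ≠ 0 ∧
        Subtype.val '' (⇑h '' (Subtype.val ⁻¹' L1 c1 c2)) = L2 c1' c2') ∧
      (∀ c1' c2' : ℝ, c2' ≠ 0 → ∃ c1 c2 : ℝ, c2 ≠ 0 ∧
        Subtype.val '' (⇑h '' (Subtype.val ⁻¹' L1 c1 c2)) = L2 c1' c2') := by
  subst hV
  have h₀₁ : (0 : Fin (2*k+6)) ≠ 1 := by simp
  have h₀₃ : (0 : Fin (2*k+6)) ≠ 3 := by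
    simp [Fin.ext_iff, Nat.mod_eq_of_lt (by omega : 3 < 2*k+6)]
  have h₁₃ : (1 : Fin (2*k+6)) ≠ 3 := by
    simp [Fin.ext_iff, Nat.mod_eq_of_lt (by omega : 3 < 2*k+6)]
  set h := leafHomeomorph h₀₁ h₀₃ h₁₃
  have leaf_eq (c1 c2 : ℝ) : Subtype.val '' (h '' (Subtype.val ⁻¹' L1 c1 c2)) = L2 c1 c2 := by
    rw [hL1, hL2]
    exact Subtype.val_image_image_sep_eq h.toEquiv
      (fun x => leafInvariants₂_leafMap h₀₁ h₀₃ h₁₃ x.2) {u | u.1 = c2 ∧ u.2 = c1}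
  exact ⟨h, fun c1 c2 hc2 => ⟨c1, c2, hc2, leaf_eq c1 c2⟩,
    fun c1 c2 hc2 => ⟨c1, c2, hc2, leaf_eq c1 c2⟩⟩
end
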